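/- arXiv:0906.0855 — 8 statements merged into one kernel-verified Lean document; each statement's English description precedes it below -/
import Mathlib

section
/- Let S be a semigroup with right local units. Then the category S-Set of closed right S-sets is equivalent to the presheaf category PSh(C(S)). An equivalence is given by the functor Q with Q(X)(e) = Xe = {x ∈ X : xe = x} and, for a morphism (e,s,f) of C(S), Q(X)(e,s,f) : Xe → Xf, x ↦ xs. -/
universe u

open CategoryTheory

theorem idem_left_absorb {S : Type u} [Semigroup S] {e f s : S}
    (he : e * e = e) (h : e * s * f = s) : e * s = s := by
  conv_lhs => rw [← h]
  rw [← mul_assoc, ← mul_assoc, he]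
  exact h

theorem idem_right_absorb {S : Type u} [Semigroup S] {e f s : S}
    (hf : f * f = f) (h : e * s * f = s) : s * f = s := by
  conv_lhs => rw [← h]
  rw [mul_assoc, hf]
  exact h

/-- The Cauchy completion `C(S)` of a semigroup `S`: objects are the idempotents,
and a morphism `f ⟶ e` is an element `s` with `e * s * f = s`; composition is
multiplication. -/
def CauchyCat (S : Type u) [Semigroup S] : Type u := {e : S // e * e = e}

namespace CauchyCat

variable {S : Type u} [Semigroup S]

instance : Category.{u} (CauchyCat S) where
  Hom f e := {s : S // e.1 * s * f.1 = s}
  id e := ⟨e.1, by rw [e.2, e.2]⟩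
  comp := fun {f g e} u v => ⟨v.1 * u.1, by
    rw [← mul_assoc, idem_left_absorb e.2 v.2, mul_assoc, idem_right_absorb f.2 u.2]⟩
  id_comp := fun {f e} u => Subtype.ext (idem_right_absorb f.2 u.2)
  comp_id := fun {f e} u => Subtype.ext (idem_left_absorb e.2 u.2)
  assoc := fun u v w => Subtype.ext (mul_assoc w.1 v.1 u.1).symm

end CauchyCat

/-- A right `S`-set: a set with an associative right action of the semigroup `S`. -/
structure RSet (S : Type u) [Semigroup S] : Type (u + 1) where
  carrier : Type u
  act : carrier → S → carrier
  act_mul : ∀ (x : carrier) (s t : S), act (act x s) t = act x (s * t)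

namespace RSet

variable {S : Type u} [Semigroup S]

/-- `S`-equivariant maps between right `S`-sets. -/
@[ext]
structure Hom (X Y : RSet S) where
  toFun : X.carrier → Y.carrier
  map_act : ∀ (x : X.carrier) (s : S), toFun (X.act x s) = Y.act (toFun x) s

/-- A right `S`-set is unitary if every element is of the form `y • s`. -/
def Unitary (X : RSet S) : Prop := ∀ x : X.carrier, ∃ (y : X.carrier) (s : S), X.act y s = x

instance homCategory {P : RSet S → Prop} : Category.{u} {X : RSet S // P X} where
  Hom X Y := RSet.Hom X.1 Y.1
  id X := ⟨fun x => x, fun _ _ => rfl⟩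
  comp f g := ⟨fun x => g.toFun (f.toFun x), fun x s => by
    simp [f.map_act, g.map_act]⟩

end RSet

/-- The category of unitary right `S`-sets, with `S`-equivariant maps. -/
abbrev USet (S : Type u) [Semigroup S] := {X : RSet S // X.Unitary}

namespace RSet

variable {S : Type u} [Semigroup S]

/-- The base relation defining the tensor product `X ⊗_S S`:
`(x • s, t) ∼ (x, s * t)`. -/
def TensorRel (X : RSet S) : (X.carrier × S) → (X.carrier × S) → Prop :=
  fun a b => ∃ (x : X.carrier) (s t : S), a = (X.act x s, t) ∧ b = (x, s * t)

/-- The tensor product `X ⊗_S S`. -/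
def Tensor (X : RSet S) : Type u := Quot (TensorRel X)

/-- The canonical map `X ⊗_S S → X`, `x ⊗ s ↦ x • s`. -/
def tensorMap (X : RSet S) : X.Tensor → X.carrier :=
  Quot.lift (fun p => X.act p.1 p.2) (by
    rintro a b ⟨x, s, t, rfl, rfl⟩
    exact X.act_mul x s t)

/-- A right `S`-set is closed if the canonical map `X ⊗_S S → X` is bijective. -/
def Closed (X : RSet S) : Prop := Function.Bijective X.tensorMap

end RSet

/-- The category of closed right `S`-sets, with `S`-equivariant maps. -/
abbrev CSet (S : Type u) [Semigroup S] := {X : RSet S // X.Closed}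

variable (S : Type u) [Semigroup S]

/-- The presheaf on `C(S)` associated with a right `S`-set `X`:
`e ↦ Xe = {x : x • e = x}`, with transition maps given by the action. -/
@[simps]
def RSet.presheaf (X : RSet S) : (CauchyCat S)ᵒᵖ ⥤ Type u where
  obj e := {x : X.carrier // X.act x e.unop.1 = x}
  map {e f} s := TypeCat.ofHom fun (x : {x : X.carrier // X.act x e.unop.1 = x}) =>
    (⟨X.act x.1 s.unop.1, by rw [X.act_mul, idem_right_absorb f.unop.2 s.unop.2]⟩ :
      {x : X.carrier // X.act x f.unop.1 = x})
  map_id e := by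
    ext x
    exact x.2
  map_comp {a b c} g h := by
    ext x
    exact (X.act_mul x.1 g.unop.1 h.unop.1).symm

/-- The functor `Q` from closed right `S`-sets to presheaves on the Cauchy
completion `C(S)`, `Q(X)(e) = Xe` and `Q(X)(e,s,f)(x) = x • s`. -/
@[simps]
def QFunctor : CSet S ⥤ ((CauchyCat S)ᵒᵖ ⥤ Type u) where
  obj X := X.1.presheaf
  map {X Y} f :=
    { app := fun e => TypeCat.ofHom fun (x : (X.1.presheaf).obj e) =>
        (⟨f.toFun x.1, by rw [← f.map_act, x.2]⟩ : (Y.1.presheaf).obj e)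
      naturality := fun e f' s => by
        ext x
        exact Subtype.ext (‹RSet.Hom X.1 Y.1›.map_act x.1 s.unop.1) }
  map_id X := by
    apply NatTrans.ext
    funext e
    ext x
    rfl
  map_comp f g := by
    apply NatTrans.ext
    funext e
    ext x
    rfl

/-!
For a closed `S`-set `X` the canonical map `X ⊗_S S → X` is a bijection, and with right local
units every `x = y s` is fixed by an idempotent (a local unit of `s`). Given `η : Q X ⟶ Q Y`,
naturality along `(f, q s, q)` shows `η_f(x s) = η_q(x) s` whenever `x q = x` and `s f = s`;
hence `x ⊗ s ↦ η_f(x s)`, for `f` a local unit of `s`, is well defined on `X ⊗_S S`, and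
composed with the inverse of `X ⊗_S S ≅ X` it is an equivariant map agreeing with `η_e` on
`X e` (as `x = x e` there). Essential surjectivity needs no local units: a presheaf `F` is
`Q(F ⊗_{C(S)} S)` via `x ↦ x ⊗ e` on `F e`.
-/

def HasRightLocalUnits : Prop := ∀ s : S, ∃ e : S, e * e = e ∧ s * e = s

namespace CauchyCat

variable {S}

@[simp]
lemma id_val (e : CauchyCat S) : (𝟙 e : e ⟶ e).1 = e.1 := rfl

@[simp]
lemma comp_val {e f g : CauchyCat S} (u : f ⟶ g) (v : g ⟶ e) : (u ≫ v).1 = v.1 * u.1 := rfl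

@[ext]
lemma hom_ext {e f : CauchyCat S} {u v : f ⟶ e} (h : u.1 = v.1) : u = v := Subtype.ext h

lemma idem_mul_hom {e f : CauchyCat S} (u : f ⟶ e) : e.1 * u.1 = u.1 := idem_left_absorb e.2 u.2

lemma hom_mul_idem {e f : CauchyCat S} (u : f ⟶ e) : u.1 * f.1 = u.1 := idem_right_absorb f.2 u.2

def sandwich (e f : CauchyCat S) (s : S) : f ⟶ e :=
  ⟨e.1 * s * f.1, by simp only [← mul_assoc, e.2]; rw [mul_assoc, f.2]⟩

noncomputable def localUnit (hS : HasRightLocalUnits S) (s : S) : CauchyCat S :=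
  ⟨(hS s).choose, (hS s).choose_spec.1⟩

lemma mul_localUnit (hS : HasRightLocalUnits S) (s : S) : s * (localUnit hS s).1 = s :=
  (hS s).choose_spec.2

end CauchyCat

namespace RSet

open CauchyCat Opposite

variable {S}

section PresheafHom

variable {X Y : RSet S}

lemma Tensor.mk_act (x : X.carrier) (s t : S) :
    (Quot.mk _ (X.act x s, t) : X.Tensor) = Quot.mk _ (x, s * t) :=
  Quot.sound ⟨x, s, t, rfl, rfl⟩

lemma Closed.unitary (hX : X.Closed) : X.Unitary := by
  intro x
  obtain ⟨⟨y, s⟩, hys⟩ := hX.2 x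
  exact ⟨y, s, hys⟩

lemma exists_idempotent_act_eq_self (hS : HasRightLocalUnits S) (hX : X.Unitary)
    (x : X.carrier) : ∃ e : CauchyCat S, X.act x e.1 = x := by
  obtain ⟨y, s, rfl⟩ := hX x
  exact ⟨localUnit hS s, by rw [X.act_mul, mul_localUnit]⟩

/-- Naturality along the morphism `(f, q s, q)`. -/
lemma presheafHom_app_val_eq_act (η : X.presheaf ⟶ Y.presheaf) {q f : CauchyCat S}
    {x : X.carrier} (hx : X.act x q.1 = x) {s : S} (hs : s * f.1 = s)
    (z : X.presheaf.obj (op f)) (hz : z.1 = X.act x s) :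
    (η.app (op f) z).1 = Y.act (η.app (op q) ⟨x, hx⟩).1 s := by
  let u : f ⟶ q := ⟨q.1 * s, by rw [← mul_assoc, q.2, mul_assoc, hs]⟩
  have hxu : X.presheaf.map u.op ⟨x, hx⟩ = z :=
    Subtype.ext (show X.act x (q.1 * s) = z.1 by rw [← X.act_mul, hx, hz])
  have hnat := congrArg Subtype.val (NatTrans.naturality_apply η u.op ⟨x, hx⟩)
  rw [hxu] at hnat
  rw [hnat]
  show Y.act _ (q.1 * s) = _
  rw [← Y.act_mul, (η.app (op q) ⟨x, hx⟩).2]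

section LocalUnits

variable (hS : HasRightLocalUnits S)

noncomputable def presheafHomTensorLift (hX : X.Unitary)
    (η : X.presheaf ⟶ Y.presheaf) : X.Tensor → Y.carrier :=
  Quot.lift
    (fun p => (η.app (op (localUnit hS p.2))
      ⟨X.act p.1 p.2, by rw [X.act_mul, mul_localUnit]⟩).1)
    (by
      rintro _ _ ⟨x, s, t, rfl, rfl⟩
      obtain ⟨q, hq⟩ := exists_idempotent_act_eq_self hS hX x
      have hst : s * t * (localUnit hS t).1 = s * t := by rw [mul_assoc, mul_localUnit]
      exact (presheafHom_app_val_eq_act η hq hst _ (X.act_mul x s t)).trans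
        (presheafHom_app_val_eq_act η hq (mul_localUnit hS (s * t)) _ rfl).symm)

lemma presheafHomTensorLift_mk (hX : X.Unitary)
    (η : X.presheaf ⟶ Y.presheaf) {e : CauchyCat S} {x : X.carrier} (hx : X.act x e.1 = x) :
    presheafHomTensorLift hS hX η (Quot.mk _ (x, e.1)) = (η.app (op e) ⟨x, hx⟩).1 := by
  refine (presheafHom_app_val_eq_act η hx (mul_localUnit hS e.1) _ rfl).trans ?_
  exact (η.app (op e) ⟨x, hx⟩).2

noncomputable def presheafHomLift (hX : X.Closed) (η : X.presheaf ⟶ Y.presheaf) :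
    X.carrier → Y.carrier :=
  presheafHomTensorLift hS hX.unitary η ∘ (Equiv.ofBijective _ hX).symm

lemma presheafHomLift_apply (hX : X.Closed) (η : X.presheaf ⟶ Y.presheaf) {e : CauchyCat S}
    {x : X.carrier} (hx : X.act x e.1 = x) :
    presheafHomLift hS hX η x = (η.app (op e) ⟨x, hx⟩).1 := by
  have hxe : (Equiv.ofBijective _ hX).symm x = Quot.mk _ (x, e.1) :=
    (Equiv.ofBijective _ hX).symm_apply_eq.2 hx.symm
  rw [presheafHomLift, Function.comp_apply, hxe, presheafHomTensorLift_mk]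

noncomputable def homOfPresheafHom (hX : X.Closed) (η : X.presheaf ⟶ Y.presheaf) : X.Hom Y where
  toFun := presheafHomLift hS hX η
  map_act x s := by
    obtain ⟨q, hq⟩ := exists_idempotent_act_eq_self hS hX.unitary x
    rw [presheafHomLift_apply hS hX η (e := localUnit hS s) (by rw [X.act_mul, mul_localUnit]),
      presheafHomLift_apply hS hX η hq]
    exact presheafHom_app_val_eq_act η hq (mul_localUnit hS s) _ rfl

end LocalUnits

end PresheafHom

section OfPresheaf

variable (F : (CauchyCat S)ᵒᵖ ⥤ Type u)

/-- A representative `x ⊗ t` of an element of `F ⊗_{C(S)} S`. -/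
structure PresheafTensorRep where
  idem : CauchyCat S
  elem : F.obj (op idem)
  coeff : S

/-- `F(u) y ⊗ t ∼ y ⊗ u t`. -/
def PresheafTensorRel (a b : PresheafTensorRep F) : Prop :=
  ∃ u : a.idem ⟶ b.idem, a.elem = F.map u.op b.elem ∧ b.coeff = u.1 * a.coeff

/-- The right `S`-set `F ⊗_{C(S)} S`. -/
def ofPresheaf : RSet S where
  carrier := Quot (PresheafTensorRel F)
  act z s := Quot.map (fun a => (⟨a.idem, a.elem, a.coeff * s⟩ : PresheafTensorRep F))
    (fun _ _ ⟨u, hx, ht⟩ => ⟨u, hx, by rw [ht, mul_assoc]⟩) z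
  act_mul := by
    rintro ⟨a⟩ s t
    exact congrArg (fun c => Quot.mk _ (⟨a.idem, a.elem, c⟩ : PresheafTensorRep F))
      (mul_assoc a.coeff s t)

variable {F}

def ofPresheafMk (e : CauchyCat S) (x : F.obj (op e)) (t : S) : (ofPresheaf F).carrier :=
  Quot.mk _ ⟨e, x, t⟩

lemma ofPresheafMk_act (e : CauchyCat S) (x : F.obj (op e)) (t s : S) :
    (ofPresheaf F).act (ofPresheafMk e x t) s = ofPresheafMk e x (t * s) := rfl

lemma ofPresheafMk_map {e e' : CauchyCat S} (u : e ⟶ e') (y : F.obj (op e')) (t : S) :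
    ofPresheafMk e (F.map u.op y) t = ofPresheafMk e' y (u.1 * t) :=
  Quot.sound ⟨u, rfl, rfl⟩

lemma ofPresheafMk_idem_mul (e : CauchyCat S) (x : F.obj (op e)) (t : S) :
    ofPresheafMk e x (e.1 * t) = ofPresheafMk e x t := by
  simpa using (ofPresheafMk_map (𝟙 e) x t).symm

/-- The inverse `x ⊗ t ↦ (x ⊗ e) ⊗ t`, for `x ∈ F e`, of the canonical map
`(F ⊗ S) ⊗_S S → F ⊗ S`. -/
def ofPresheafTensorSection : (ofPresheaf F).carrier → (ofPresheaf F).Tensor :=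
  Quot.lift (fun a => Quot.mk _ (ofPresheafMk a.idem a.elem a.idem.1, a.coeff)) (by
    rintro a b ⟨u, hx, ht⟩
    have hmk : ofPresheafMk a.idem a.elem a.idem.1
        = (ofPresheaf F).act (ofPresheafMk b.idem b.elem b.idem.1) u.1 := by
      rw [hx, ofPresheafMk_map, hom_mul_idem, ofPresheafMk_act, ofPresheafMk_idem_mul]
    rw [hmk, Tensor.mk_act, ht])

lemma ofPresheaf_closed : (ofPresheaf F).Closed := by
  refine Function.bijective_iff_has_inverse.2 ⟨ofPresheafTensorSection, ?_, ?_⟩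
  · rintro ⟨⟨⟨a⟩, s⟩⟩
    show Quot.mk _ (ofPresheafMk a.idem a.elem a.idem.1, a.coeff * s) = _
    rw [← Tensor.mk_act, ofPresheafMk_act, ofPresheafMk_idem_mul]
    rfl
  · rintro ⟨a⟩
    exact ofPresheafMk_idem_mul a.idem a.elem a.coeff

def ofPresheafEval (e : CauchyCat S) : (ofPresheaf F).carrier → F.obj (op e) :=
  Quot.lift (fun a => F.map (sandwich a.idem e a.coeff).op a.elem) (by
    rintro a b ⟨u, hx, ht⟩
    have hu : sandwich a.idem e a.coeff ≫ u = sandwich b.idem e b.coeff := by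
      ext
      simp only [comp_val, sandwich, ht, ← mul_assoc]
      rw [hom_mul_idem, idem_mul_hom]
    dsimp only
    rw [hx, ← Functor.map_comp_apply, ← op_comp, hu])

lemma ofPresheafEval_mk (e : CauchyCat S) (x : F.obj (op e)) :
    ofPresheafEval e (ofPresheafMk e x e.1) = x := by
  have he : sandwich e e e.1 = 𝟙 e := by
    ext
    simp only [sandwich, e.2, id_val]
  show F.map (sandwich e e e.1).op x = x
  rw [he, op_id, Functor.map_id_apply]

lemma ofPresheafMk_eval {e : CauchyCat S} {z : (ofPresheaf F).carrier}
    (hz : (ofPresheaf F).act z e.1 = z) : ofPresheafMk e (ofPresheafEval e z) e.1 = z := by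
  induction z using Quot.ind with
  | mk a =>
    change ofPresheafMk a.idem a.elem (a.coeff * e.1) = ofPresheafMk a.idem a.elem a.coeff at hz
    show ofPresheafMk e (F.map (sandwich a.idem e a.coeff).op a.elem) e.1
      = ofPresheafMk a.idem a.elem a.coeff
    rw [ofPresheafMk_map, ← hz]
    simp only [sandwich, mul_assoc, e.2]
    exact ofPresheafMk_idem_mul _ _ _

variable (F) in
def ofPresheafIso : F ≅ (ofPresheaf F).presheaf :=
  NatIso.ofComponents (fun e => Equiv.toIso
    { toFun x := ⟨ofPresheafMk e.unop x e.unop.1, by rw [ofPresheafMk_act, e.unop.2]⟩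
      invFun z := ofPresheafEval e.unop z.1
      left_inv := ofPresheafEval_mk e.unop
      right_inv z := Subtype.ext (ofPresheafMk_eval z.2) })
    (fun {e e'} h => by
      ext x
      apply Subtype.ext
      show ofPresheafMk e'.unop (F.map h.unop.op x) e'.unop.1
        = ofPresheafMk e.unop x (e.unop.1 * h.unop.1)
      rw [ofPresheafMk_map, hom_mul_idem, idem_mul_hom])

end OfPresheaf

end RSet

section

open Opposite

variable {S}

instance qFunctor_essSurj : (QFunctor S).EssSurj :=
  ⟨fun F => ⟨⟨RSet.ofPresheaf F, RSet.ofPresheaf_closed⟩, ⟨(RSet.ofPresheafIso F).symm⟩⟩⟩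

lemma qFunctor_faithful (hS : HasRightLocalUnits S) :
    (QFunctor S).Faithful where
  map_injective {X _} f g h := by
    refine RSet.Hom.ext (funext fun x => ?_)
    obtain ⟨e, hx⟩ := RSet.exists_idempotent_act_eq_self hS X.2.unitary x
    exact congrArg (fun η => (η.app (op e) ⟨x, hx⟩).1) h

lemma qFunctor_full (hS : HasRightLocalUnits S) : (QFunctor S).Full where
  map_surjective {X _} η := ⟨RSet.homOfPresheafHom hS X.2 η, by
    ext ⟨e⟩ ⟨x, hx⟩
    exact Subtype.ext (RSet.presheafHomLift_apply hS X.2 η hx)⟩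

end

/-- If `S` is a semigroup with right local units, then `Q` is an equivalence
between the category of closed right `S`-sets and presheaves on `C(S)`. -/
theorem qFunctor_isEquivalence
    (hS : ∀ s : S, ∃ e : S, e * e = e ∧ s * e = s) :
    (QFunctor S).IsEquivalence :=
  { faithful := qFunctor_faithful hS
    full := qFunctor_full hS
    essSurj := qFunctor_essSurj }
end

section
/- Let C and D be small categories and let U : PSh(C) → PSh(D) be a colimit-preserving functor admitting a colimit-preserving right adjoint. Then for every object c of C, the presheaf U(y(c)) is a retract of a representable presheaf, where y denotes the Yoneda embedding. Moreover, if idempotents split in D, then every U(y(c)) is isomorphic to a representable presheaf. -/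
/-!
The unit `yoneda.obj c ⟶ G.obj (U.obj (yoneda.obj c))` is an element of a colimit of types,
because `G` preserves the canonical colimit of `U.obj (yoneda.obj c)` over its elements.
So it factors as `y ≫ G.map f` for some `f : yoneda.obj d ⟶ U.obj (yoneda.obj c)`, and the
adjoint transpose of `y` is a section of `f`. When idempotents split in `D`, the idempotent of
this retract on `yoneda.obj d` comes from `D` by full faithfulness of Yoneda, and its splitting
makes `U.obj (yoneda.obj c)` representable.
-/

universe u

open CategoryTheory

namespace CategoryTheory

open Limits

def Adjunction.retractOfFactorsUnit {C D : Type*} [Category* C] [Category* D] {U : C ⥤ D}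
    {G : D ⥤ C} (adj : U ⊣ G) {X : C} {Y : D} (y : X ⟶ G.obj Y) (f : Y ⟶ U.obj X)
    (h : y ≫ G.map f = adj.unit.app X) : Retract (U.obj X) Y where
  i := (adj.homEquiv _ _).symm y
  r := f
  retract := by rw [← adj.homEquiv_naturality_right_symm, h, adj.homEquiv_symm_unit]

theorem Functor.FullyFaithful.exists_iso_of_retract {D E : Type*} [Category* D] [Category* E]
    [IsIdempotentComplete D] {F : D ⥤ E} (hF : F.FullyFaithful) {X : E} {d : D}
    (h : Retract X (F.obj d)) : ∃ d' : D, Nonempty (X ≅ F.obj d') := by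
  set e : d ⟶ d := hF.preimage (h.r ≫ h.i)
  have hFe : F.map e = h.r ≫ h.i := hF.map_preimage _
  have he : e ≫ e = e := hF.map_injective (by simp [hFe])
  obtain ⟨d', s, p, hsp, hps⟩ := IsIdempotentComplete.idempotents_split d e he
  refine ⟨d', ⟨⟨h.i ≫ F.map p, F.map s ≫ h.r, ?_, ?_⟩⟩⟩
  · rw [Category.assoc, ← F.map_comp_assoc, hps, hFe]
    simp
  · have hmap : F.map s ≫ h.r ≫ h.i ≫ F.map p = F.map (s ≫ e ≫ p) := by simp [hFe]
    rw [Category.assoc, hmap, ← hps]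
    simp only [Category.assoc, reassoc_of% hsp, hsp, F.map_id]

theorem exists_comp_map_eq_of_preservesColimits {C : Type*} [Category.{u} C]
    {D : Type u} [SmallCategory D] (G : (Dᵒᵖ ⥤ Type u) ⥤ (Cᵒᵖ ⥤ Type u))
    [PreservesColimitsOfSize.{u, u} G]
    (P : Dᵒᵖ ⥤ Type u) {c : C} (x : yoneda.obj c ⟶ G.obj P) :
    ∃ (d : D) (f : yoneda.obj d ⟶ P) (y : yoneda.obj c ⟶ G.obj (yoneda.obj d)),
      y ≫ G.map f = x := by
  have hP : IsColimit (((evaluation Cᵒᵖ (Type u)).obj (Opposite.op c)).mapCocone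
      (G.mapCocone (Presheaf.tautologicalCocone P))) :=
    isColimitOfPreserves _ (isColimitOfPreserves G (Presheaf.isColimitTautologicalCocone P))
  obtain ⟨j, y, hy⟩ := Types.jointly_surjective _ hP (yonedaEquiv x)
  change (G.obj (yoneda.obj j.left)).obj (Opposite.op c) at y
  refine ⟨j.left, j.hom, yonedaEquiv.symm y, yonedaEquiv.injective ?_⟩
  rw [yonedaEquiv_comp, Equiv.apply_symm_apply]
  exact hy

end CategoryTheory

theorem image_of_representable_retract_of_representable_general
    {C : Type u} [SmallCategory C] {D : Type u} [SmallCategory D]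
    (U : (Cᵒᵖ ⥤ Type u) ⥤ (Dᵒᵖ ⥤ Type u))
    (G : (Dᵒᵖ ⥤ Type u) ⥤ (Cᵒᵖ ⥤ Type u))
    (adj : U ⊣ G)
    [Limits.PreservesColimits G] :
    (∀ c : C, ∃ (d : D) (i : U.obj (yoneda.obj c) ⟶ yoneda.obj d)
      (r : yoneda.obj d ⟶ U.obj (yoneda.obj c)), i ≫ r = 𝟙 (U.obj (yoneda.obj c))) ∧
    (IsIdempotentComplete D →
      ∀ c : C, ∃ d : D, Nonempty (U.obj (yoneda.obj c) ≅ yoneda.obj d)) := by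
  have retract (c : C) : ∃ d : D, Nonempty (Retract (U.obj (yoneda.obj c)) (yoneda.obj d)) := by
    obtain ⟨d, f, y, hy⟩ :=
      exists_comp_map_eq_of_preservesColimits G (U.obj (yoneda.obj c)) (adj.unit.app _)
    exact ⟨d, ⟨adj.retractOfFactorsUnit y f hy⟩⟩
  refine ⟨fun c => ?_, fun _ c => ?_⟩
  · obtain ⟨d, ⟨h⟩⟩ := retract c
    exact ⟨d, h.i, h.r, h.retract⟩
  · obtain ⟨d, ⟨h⟩⟩ := retract c
    exact Yoneda.fullyFaithful.exists_iso_of_retract h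

/-- If a colimit-preserving functor between presheaf categories (i.e. a profunctor)
has a colimit-preserving right adjoint, then the image of every representable is a
retract of a representable; and when idempotents split in `D`, it is in fact
isomorphic to a representable. -/
theorem image_of_representable_retract_of_representable
    {C : Type u} [SmallCategory C] {D : Type u} [SmallCategory D]
    (U : (Cᵒᵖ ⥤ Type u) ⥤ (Dᵒᵖ ⥤ Type u))
    (G : (Dᵒᵖ ⥤ Type u) ⥤ (Cᵒᵖ ⥤ Type u))
    (adj : U ⊣ G)
    [Limits.PreservesColimits U] [Limits.PreservesColimits G] :
    (∀ c : C, ∃ (d : D) (i : U.obj (yoneda.obj c) ⟶ yoneda.obj d)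
      (r : yoneda.obj d ⟶ U.obj (yoneda.obj c)), i ≫ r = 𝟙 (U.obj (yoneda.obj c))) ∧
    (IsIdempotentComplete D →
      ∀ c : C, ∃ d : D, Nonempty (U.obj (yoneda.obj c) ≅ yoneda.obj d)) :=
  image_of_representable_retract_of_representable_general U G adj
end

section
/- Let C and D be small categories in which idempotents split. If the presheaf categories PSh(C) and PSh(D) are equivalent, then there is a Morita context for C and D: a category U together with weak equivalences C → U and D → U, where the set of objects of U is the disjoint union of the objects of C and the objects of D. -/
/-!
The inverse of an equivalence `e : PSh(C) ≌ PSh(D)` sends each representable `yoneda d` to a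
presheaf `T` on `C` that is a retract of a representable: `T` is the colimit of representables
over its elements, and since evaluation at `d` preserves colimits, the element of `(e T)(d)`
given by the isomorphism `yoneda d ≅ e T` comes from one of them. As idempotents split in
`C`, such a retract is itself representable. So `yoneda : C ⥤ PSh(C)` and
`yoneda ⋙ e⁻¹ : D ⥤ PSh(C)` are fully faithful with the same essential image, and the category
they induce on `C ⊕ D` from `PSh(C)` is a Morita context.
-/

universe u

namespace CategoryTheory

section

variable {C E : Type*} [Category* C] [Category* E]

lemma Functor.FullyFaithful.exists_iso_obj_of_retract [IsIdempotentComplete C] {F : C ⥤ E}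
    (hF : F.FullyFaithful) {X : E} {Y : C} (h : Retract X (F.obj Y)) :
    ∃ Z, Nonempty (X ≅ F.obj Z) := by
  let p : Y ⟶ Y := hF.preimage (h.r ≫ h.i)
  have hp : F.map p = h.r ≫ h.i := hF.map_preimage _
  obtain ⟨Z, i, r, hir, hri⟩ :=
    IsIdempotentComplete.idempotents_split Y p (hF.map_injective (by simp [hp]))
  refine ⟨Z, ⟨⟨h.i ≫ F.map r, F.map i ≫ h.r, ?_, ?_⟩⟩⟩
  · simp [← F.map_comp_assoc, hri, hp]
  · rw [Category.assoc, reassoc_of% hp.symm, ← hri, ← F.map_comp, ← F.map_comp]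
    simp [hir]

end

open Limits Presheaf

section

variable {C D : Type u} [SmallCategory C] [SmallCategory D]

lemma exists_factorization_through_map_yoneda (F : (Cᵒᵖ ⥤ Type u) ⥤ (Dᵒᵖ ⥤ Type u))
    [PreservesColimitsOfSize.{u, u} F] {T : Cᵒᵖ ⥤ Type u} {d : D}
    (f : yoneda.obj d ⟶ F.obj T) :
    ∃ (c : C) (s : yoneda.obj c ⟶ T) (g : yoneda.obj d ⟶ F.obj (yoneda.obj c)),
      g ≫ F.map s = f := by
  obtain ⟨j, x, hx⟩ := FunctorToTypes.jointly_surjective _ (Opposite.op d)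
    (isColimitOfPreserves F (isColimitTautologicalCocone T)) (yonedaEquiv f)
  let s : yoneda.obj j.left ⟶ T := (tautologicalCocone T).ι.app j
  have hx' : (F.map s).app (Opposite.op d) x = yonedaEquiv f := hx.symm
  have hnat := yonedaEquiv_symm_naturality_right d (F.map s) x
  rw [hx', Equiv.symm_apply_apply] at hnat
  exact ⟨j.left, s, _, hnat⟩

lemma exists_retract_yoneda_of_iso_yoneda {F : (Cᵒᵖ ⥤ Type u) ⥤ (Dᵒᵖ ⥤ Type u)}
    (hF : F.FullyFaithful) [PreservesColimitsOfSize.{u, u} F] {T : Cᵒᵖ ⥤ Type u} {d : D}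
    (φ : F.obj T ≅ yoneda.obj d) : ∃ c, Nonempty (Retract T (yoneda.obj c)) := by
  obtain ⟨c, s, g, hg⟩ := exists_factorization_through_map_yoneda F φ.inv
  exact ⟨c, ⟨⟨hF.preimage (φ.hom ≫ g), s, hF.map_injective (by simp [hg])⟩⟩⟩

lemma Equivalence.exists_iso_inverse_obj_yoneda [IsIdempotentComplete C]
    (e : (Cᵒᵖ ⥤ Type u) ≌ (Dᵒᵖ ⥤ Type u)) (d : D) :
    ∃ c, Nonempty (e.inverse.obj (yoneda.obj d) ≅ yoneda.obj c) := by
  obtain ⟨c₀, ⟨h⟩⟩ := exists_retract_yoneda_of_iso_yoneda e.fullyFaithfulFunctor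
    (e.counitIso.app (yoneda.obj d))
  exact Yoneda.fullyFaithful.exists_iso_obj_of_retract h

end

section Bipartite

variable {C D E : Type*} [Category* C] [Category* D] [Category* E] (F : C ⥤ E) (G : D ⥤ E)

abbrev Bipartite : Type _ := InducedCategory E (Sum.elim F.obj G.obj)

namespace Bipartite

def inl : C ⥤ Bipartite F G where
  obj := Sum.inl
  map f := InducedCategory.homMk (F.map f)

def inr : D ⥤ Bipartite F G where
  obj := Sum.inr
  map f := InducedCategory.homMk (G.map f)

variable {F G}

def fullyFaithfulInl (hF : F.FullyFaithful) : (inl F G).FullyFaithful :=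
  Functor.FullyFaithful.ofCompFaithful (G := inducedFunctor _) hF

def fullyFaithfulInr (hG : G.FullyFaithful) : (inr F G).FullyFaithful :=
  Functor.FullyFaithful.ofCompFaithful (G := inducedFunctor _) hG

lemma inl_essSurj (h : ∀ d, ∃ c, Nonempty (G.obj d ≅ F.obj c)) : (inl F G).EssSurj where
  mem_essImage
    | Sum.inl c => ⟨c, ⟨Iso.refl _⟩⟩
    | Sum.inr d => let ⟨c, ⟨φ⟩⟩ := h d; ⟨c, ⟨InducedCategory.isoMk φ.symm⟩⟩

lemma inr_essSurj (h : ∀ c, ∃ d, Nonempty (F.obj c ≅ G.obj d)) : (inr F G).EssSurj where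
  mem_essImage
    | Sum.inl c => let ⟨d, ⟨φ⟩⟩ := h c; ⟨d, ⟨InducedCategory.isoMk φ.symm⟩⟩
    | Sum.inr d => ⟨d, ⟨Iso.refl _⟩⟩

end Bipartite

end Bipartite

end CategoryTheory

open CategoryTheory

/-- If idempotents split in small categories `C` and `D` and their presheaf
categories are equivalent, then `C` and `D` admit a Morita context given by a
bipartite category: a category structure on the disjoint union `C ⊕ D` together
with fully faithful, essentially surjective functors from `C` and from `D`. -/
theorem moritaContext_of_presheaf_equivalence
    {C D : Type u} [SmallCategory C] [SmallCategory D]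
    (hC : IsIdempotentComplete C) (hD : IsIdempotentComplete D)
    (h : Nonempty ((Cᵒᵖ ⥤ Type u) ≌ (Dᵒᵖ ⥤ Type u))) :
    ∃ (instU : Category.{u} (C ⊕ D)) (F : @Functor C _ (C ⊕ D) instU)
      (G : @Functor D _ (C ⊕ D) instU),
      F.Full ∧ F.Faithful ∧ F.EssSurj ∧ G.Full ∧ G.Faithful ∧ G.EssSurj := by
  obtain ⟨e⟩ := h
  let G₀ : D ⥤ Cᵒᵖ ⥤ Type u := yoneda ⋙ e.inverse
  have hF := Bipartite.fullyFaithfulInl (G := G₀) Yoneda.fullyFaithful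
  have hG := Bipartite.fullyFaithfulInr (F := yoneda)
    (Yoneda.fullyFaithful.comp e.fullyFaithfulInverse)
  have hGF : ∀ d, ∃ c, Nonempty (G₀.obj d ≅ yoneda.obj c) := e.exists_iso_inverse_obj_yoneda
  have hFG : ∀ c, ∃ d, Nonempty (yoneda.obj c ≅ G₀.obj d) := fun c ↦
    let ⟨d, ⟨ψ⟩⟩ := e.symm.exists_iso_inverse_obj_yoneda c
    ⟨d, ⟨e.unitIso.app _ ≪≫ e.inverse.mapIso ψ⟩⟩
  exact ⟨_, Bipartite.inl yoneda G₀, Bipartite.inr yoneda G₀, hF.full, hF.faithful,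
    Bipartite.inl_essSurj hGF, hG.full, hG.faithful, Bipartite.inr_essSurj hFG⟩
end

section
/- Let S be an inverse semigroup. Then: (1) for every idempotent e of S, the right S-set eS is unitary; (2) a unitary right S-set is indecomposable and projective if and only if it is isomorphic to eS for some idempotent e; (3) the functor F from C(S) to the category of unitary right S-sets, sending an idempotent e to eS and a morphism (f,a,e) to the map eS → fS, x ↦ ax, is fully faithful. -/
universe u

open CategoryTheory

/-- An inverse semigroup: every element has a unique (von Neumann) inverse,
selected by `star`. -/
class InverseSemigroup (S : Type u) extends Semigroup S where
  star : S → S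
  mul_star_mul : ∀ s : S, s * star s * s = s
  star_mul_star : ∀ s : S, star s * s * star s = star s
  star_unique : ∀ s t : S, s * t * s = s → t * s * t = t → t = star s

namespace InverseSemigroup

variable {S : Type u} [InverseSemigroup S]

theorem star_star (s : S) : star (star s) = s :=
  (star_unique (star s) s (star_mul_star s) (mul_star_mul s)).symm

theorem star_idem {e : S} (he : e * e = e) : star e = e :=
  (star_unique e e (by rw [he, he]) (by rw [he, he])).symm

theorem mul_idem {e f : S} (he : e * e = e) (hf : f * f = f) :
    (e * f) * (e * f) = e * f := by
  set x := star (e * f) with hx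
  have hxfix : (e * f) * x * (e * f) = e * f := mul_star_mul (e * f)
  have hxfix' : x * (e * f) * x = x := star_mul_star (e * f)
  have he1 : ∀ y : S, e * (e * y) = e * y := fun y => by rw [← mul_assoc, he]
  have hf1 : ∀ y : S, f * (f * y) = f * y := fun y => by rw [← mul_assoc, hf]
  have A : e * (f * (x * (e * f))) = e * f := by
    simpa only [mul_assoc] using hxfix
  have B1 : ∀ y : S, x * (e * (f * (x * y))) = x * y := fun y => by
    have h := congrArg (· * y) hxfix'
    simpa only [mul_assoc] using h
  have h1 : (e * f) * (f * x * e) * (e * f) = e * f := by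
    simp only [mul_assoc, hf1, he1]
    exact A
  have h2 : (f * x * e) * (e * f) * (f * x * e) = f * x * e := by
    simp only [mul_assoc, he1, hf1, B1]
  have hC : f * x * e = x := by
    have := star_unique (e * f) (f * x * e) h1 h2
    rwa [← hx] at this
  have hCn : f * (x * e) = x := by simpa only [mul_assoc] using hC
  have key : (f * (x * e)) * (f * (x * e)) = f * (x * e) := by
    simp only [mul_assoc, B1]
  have hD : x * x = x := by rw [← hCn]; exact key
  have hE : e * f = x := (star_unique x (e * f) hxfix' hxfix).trans (star_idem hD)
  rw [hE]; exact hD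

theorem idem_comm {e f : S} (he : e * e = e) (hf : f * f = f) :
    e * f = f * e := by
  have hef : (e * f) * (e * f) = e * f := mul_idem he hf
  have hfe : (f * e) * (f * e) = f * e := mul_idem hf he
  have he1 : ∀ y : S, e * (e * y) = e * y := fun y => by rw [← mul_assoc, he]
  have hf1 : ∀ y : S, f * (f * y) = f * y := fun y => by rw [← mul_assoc, hf]
  have hefn : e * (f * (e * f)) = e * f := by simpa only [mul_assoc] using hef
  have hfen : f * (e * (f * e)) = f * e := by simpa only [mul_assoc] using hfe
  have h1 : (e * f) * (f * e) * (e * f) = e * f := by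
    simp only [mul_assoc, hf1, he1]
    exact hefn
  have h2 : (f * e) * (e * f) * (f * e) = f * e := by
    simp only [mul_assoc, he1, hf1]
    exact hfen
  have := star_unique (e * f) (f * e) h1 h2
  rw [this, star_idem hef]

theorem star_mul (a b : S) : star (a * b) = star b * star a := by
  set u := star a with hu
  set v := star b with hv
  have han : a * (u * a) = a := by simpa only [mul_assoc] using mul_star_mul a
  have hun : u * (a * u) = u := by simpa only [mul_assoc] using star_mul_star a
  have hbn : b * (v * b) = b := by simpa only [mul_assoc] using mul_star_mul b
  have hvn : v * (b * v) = v := by simpa only [mul_assoc] using star_mul_star b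
  have ha1 : ∀ y : S, a * (u * (a * y)) = a * y := fun y => by
    have h := congrArg (· * y) (mul_star_mul a); simpa only [mul_assoc] using h
  have hv1 : ∀ y : S, v * (b * (v * y)) = v * y := fun y => by
    have h := congrArg (· * y) (star_mul_star b); simpa only [mul_assoc] using h
  have hua : (u * a) * (u * a) = u * a := by
    simp only [mul_assoc]; rw [han]
  have hbv : (b * v) * (b * v) = b * v := by
    simp only [mul_assoc]; rw [hvn]
  have hc : (b * v) * (u * a) = (u * a) * (b * v) := idem_comm hbv hua
  have hc1 : ∀ y : S, b * (v * (u * (a * y))) = u * (a * (b * (v * y))) := fun y => by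
    have h := congrArg (· * y) hc; simpa only [mul_assoc] using h
  have goal1 : (a * b) * (v * u) * (a * b) = a * b := by
    simp only [mul_assoc]
    rw [hc1, ha1, hbn]
  have goal2 : (v * u) * (a * b) * (v * u) = v * u := by
    simp only [mul_assoc]
    rw [← hc1, hv1, hun]
  exact ((star_unique (a * b) (v * u) goal1 goal2)).symm

theorem star_mul_self_idem (s : S) : (star s * s) * (star s * s) = star s * s := by
  have h := congrArg (star s * ·) (mul_star_mul s)
  simpa only [mul_assoc] using h

theorem mul_star_self_idem (s : S) : (s * star s) * (s * star s) = s * star s := by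
  have h := congrArg (· * star s) (mul_star_mul s)
  simpa only [mul_assoc] using h

end InverseSemigroup

open InverseSemigroup

/-- An object is indecomposable if its covariant hom-functor preserves coproducts. -/
def Indecomposable {C : Type*} [Category.{u} C] (P : C) : Prop :=
  ∀ J : Type u,
    Nonempty (Limits.PreservesColimitsOfShape (Discrete J) (coyoneda.obj (Opposite.op P)))

variable {S : Type u} [InverseSemigroup S]

/-- The right `S`-set `eS`, for an idempotent `e`. -/
def principalRSet (e : {e : S // e * e = e}) : RSet S where
  carrier := {s : S // e.1 * s = s}
  act x s := ⟨x.1 * s, by rw [← mul_assoc, x.2]⟩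
  act_mul x s t := Subtype.ext (mul_assoc x.1 s t)

theorem principalRSet_unitary (e : {e : S // e * e = e}) : (principalRSet e).Unitary :=
  fun x => ⟨x, star x.1 * x.1, Subtype.ext (by
    show x.1 * (star x.1 * x.1) = x.1
    rw [← mul_assoc, mul_star_mul])⟩

/-- The unitary right `S`-set `eS`, for an idempotent `e`. -/
def principalUSet (e : {e : S // e * e = e}) : USet S :=
  ⟨principalRSet e, principalRSet_unitary e⟩

/-- The functor `F : C(S) → S-Set`, `e ↦ eS`, `(f,a,e) ↦ (x ↦ ax)`. -/
def FFunctor (S : Type u) [InverseSemigroup S] : CauchyCat S ⥤ USet S where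
  obj e := principalUSet e
  map {e f} u :=
    { toFun := fun x => ⟨u.1 * x.1, by rw [← mul_assoc, idem_left_absorb f.2 u.2]⟩
      map_act := fun x s => Subtype.ext (mul_assoc u.1 x.1 s).symm }
  map_id e := by
    apply RSet.Hom.ext
    funext x
    exact Subtype.ext x.2
  map_comp {e f g} u v := by
    apply RSet.Hom.ext
    funext x
    exact Subtype.ext (mul_assoc v.1 u.1 x.1)

/-!
For an idempotent `e`, a map `eS ⟶ Y` is determined by the image of `e`, which may be any point of
`Y` fixed by `e`. Hence `Hom(eS, -)` is the functor of `e`-fixed points: it preserves disjoint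
unions (the coproducts of unitary `S`-sets) and surjections (the epimorphisms), so `eS` is
indecomposable and projective. Conversely, in an inverse semigroup every point `x = y s` of a
unitary `S`-set is fixed by the idempotent `s⁻¹ s`, so every unitary `S`-set is a quotient of a
disjoint union of sets `eS`. If `X` is projective, the identity of `X` lifts to this union, and
if `X` is also indecomposable the lift lands in one summand `fS`. Then `X` is a retract of `fS`,
the corresponding idempotent endomorphism of `fS` is left multiplication by an idempotent `a`,
and `X ≅ aS`.
-/

open Limits

theorem Indecomposable.of_iso {C : Type*} [Category.{u} C] {P Q : C} (i : P ≅ Q)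
    (hP : Indecomposable P) : Indecomposable Q := fun J => by
  obtain ⟨_⟩ := hP J
  exact ⟨preservesColimitsOfShape_of_natIso (coyoneda.mapIso i.op).symm⟩

namespace USet

section Semigroup

variable {S : Type u} [Semigroup S]

theorem epi_of_surjective {Y Z : USet S} (g : Y ⟶ Z) (hg : Function.Surjective g.toFun) :
    Epi g where
  left_cancellation u v huv := by
    apply RSet.Hom.ext; funext z
    obtain ⟨y, rfl⟩ := hg z
    exact congrFun (congrArg RSet.Hom.toFun huv) y

def DoubleRel {Y Z : USet S} (g : Y ⟶ Z) (p q : Z.1.carrier × Bool) : Prop :=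
  p.1 = q.1 ∧ ∃ y, g.toFun y = p.1

/-- Two copies of `Z` glued along the range of `g`. -/
def double {Y Z : USet S} (g : Y ⟶ Z) : USet S :=
  ⟨{ carrier := Quot (DoubleRel g)
     act := fun w s => Quot.lift (fun p => Quot.mk (DoubleRel g) (Z.1.act p.1 s, p.2))
       (fun p q ⟨hpq, y, hy⟩ => Quot.sound ⟨by rw [hpq], Y.1.act y s, by rw [g.map_act, hy]⟩) w
     act_mul := fun w s t => by
       induction w using Quot.ind with
       | _ p => exact congrArg (Quot.mk _) (Prod.ext (Z.1.act_mul p.1 s t) rfl) },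
   fun w => by
     induction w using Quot.ind with
     | _ p =>
       obtain ⟨z, s, hz⟩ := Z.2 p.1
       exact ⟨Quot.mk _ (z, p.2), s, congrArg (Quot.mk _) (Prod.ext hz rfl)⟩⟩

def double.ι {Y Z : USet S} (g : Y ⟶ Z) (b : Bool) : Z ⟶ double g :=
  ⟨fun z => Quot.mk _ (z, b), fun _ _ => rfl⟩

theorem surjective_of_epi {Y Z : USet S} (g : Y ⟶ Z) [Epi g] : Function.Surjective g.toFun := by
  intro z
  have hι : double.ι g true = double.ι g false :=
    (cancel_epi g).1 (RSet.Hom.ext (funext fun y => Quot.sound ⟨rfl, y, rfl⟩))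
  have hz : Quot.mk (DoubleRel g) (z, true) = Quot.mk _ (z, false) :=
    congrFun (congrArg RSet.Hom.toFun hι) z
  -- `b = false → z ∈ range g` descends to the quotient and separates the two copies of `z`.
  have hinv : ∀ p q, DoubleRel g p q →
      (p.2 = false → ∃ y, g.toFun y = p.1) = (q.2 = false → ∃ y, g.toFun y = q.1) :=
    fun p q ⟨hpq, y, hy⟩ => propext ⟨fun _ _ => ⟨y, hy.trans hpq⟩, fun _ _ => ⟨y, hy⟩⟩
  exact cast (congrArg (Quot.lift _ hinv) hz) (fun h => Bool.noConfusion h) rfl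

def sigma {J : Type u} (F : J → USet S) : USet S :=
  ⟨{ carrier := Σ j, (F j).1.carrier
     act := fun p s => ⟨p.1, (F p.1).1.act p.2 s⟩
     act_mul := fun p s t => congrArg (Sigma.mk p.1) ((F p.1).1.act_mul p.2 s t) },
   fun p => by
     obtain ⟨y, s, hy⟩ := (F p.1).2 p.2
     exact ⟨⟨p.1, y⟩, s, congrArg (Sigma.mk p.1) hy⟩⟩

def sigma.ι {J : Type u} (F : J → USet S) (j : J) : F j ⟶ sigma F :=
  ⟨fun x => ⟨j, x⟩, fun _ _ => rfl⟩

def sigmaCocone {J : Type u} (K : Discrete J ⥤ USet S) : Cocone K where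
  pt := sigma fun j => K.obj ⟨j⟩
  ι := Discrete.natTrans fun j => sigma.ι (fun j => K.obj ⟨j⟩) j.as

def isColimitSigmaCocone {J : Type u} (K : Discrete J ⥤ USet S) : IsColimit (sigmaCocone K) where
  desc s := ⟨fun p => (s.ι.app ⟨p.1⟩).toFun p.2, fun p t => (s.ι.app ⟨p.1⟩).map_act p.2 t⟩
  fac _ _ := rfl
  uniq _ _ hm := RSet.Hom.ext (funext fun p => congrFun (congrArg RSet.Hom.toFun (hm ⟨p.1⟩)) p.2)

end Semigroup

theorem exists_idem_act_eq (X : USet S) (x : X.1.carrier) :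
    ∃ e : {e : S // e * e = e}, X.1.act x e.1 = x := by
  obtain ⟨y, s, rfl⟩ := X.2 x
  refine ⟨⟨star s * s, star_mul_self_idem s⟩, ?_⟩
  rw [X.1.act_mul, ← mul_assoc, mul_star_mul]

end USet

namespace principalUSet

variable (e : {e : S // e * e = e})

def gen : (principalUSet e).1.carrier := ⟨e.1, e.2⟩

variable {e} {Y : USet S}

theorem hom_apply (h : principalUSet e ⟶ Y) (x : (principalUSet e).1.carrier) :
    h.toFun x = Y.1.act (h.toFun (gen e)) x.1 := by
  conv_lhs => rw [show x = (principalUSet e).1.act (gen e) x.1 from Subtype.ext x.2.symm]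
  exact h.map_act _ _

theorem hom_gen_act (h : principalUSet e ⟶ Y) :
    Y.1.act (h.toFun (gen e)) e.1 = h.toFun (gen e) :=
  (hom_apply h (gen e)).symm

theorem hom_ext {h h' : principalUSet e ⟶ Y} (H : h.toFun (gen e) = h'.toFun (gen e)) :
    h = h' :=
  RSet.Hom.ext (funext fun x => by rw [hom_apply h, hom_apply h', H])

variable (e) in
def homOfFixed (y : Y.1.carrier) (_ : Y.1.act y e.1 = y) : principalUSet e ⟶ Y where
  toFun x := Y.1.act y x.1
  map_act x s := (Y.1.act_mul y x.1 s).symm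

theorem homOfFixed_gen (y : Y.1.carrier) (hy : Y.1.act y e.1 = y) :
    (homOfFixed e y hy).toFun (gen e) = y := hy

def toSummand {J : Type u} {F : J → USet S} (h : principalUSet e ⟶ USet.sigma F) :
    principalUSet e ⟶ F (h.toFun (gen e)).1 :=
  homOfFixed e (h.toFun (gen e)).2
    (sigma_mk_injective (β := fun j => (F j).1.carrier) (hom_gen_act h))

theorem toSummand_comp_ι {J : Type u} {F : J → USet S} (h : principalUSet e ⟶ USet.sigma F) :
    toSummand h ≫ USet.sigma.ι F _ = h :=
  hom_ext (congrArg (Sigma.mk _) (homOfFixed_gen _ _))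

end principalUSet

open principalUSet

variable (e : {e : S // e * e = e})

theorem projective_principalUSet : Projective (principalUSet e) where
  factors {E X} f g _ := by
    obtain ⟨w, hw⟩ := USet.surjective_of_epi g (f.toFun (gen e))
    refine ⟨homOfFixed e (E.1.act w e.1) (by rw [E.1.act_mul, e.2]), hom_ext ?_⟩
    change g.toFun (E.1.act (E.1.act w e.1) e.1) = f.toFun (gen e)
    rw [E.1.act_mul, e.2, g.map_act, hw, hom_gen_act]

def isColimitMapCoconeSigmaCocone {J : Type u} (K : Discrete J ⥤ USet S) :
    IsColimit ((coyoneda.obj (Opposite.op (principalUSet e))).mapCocone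
      (USet.sigmaCocone K)) where
  desc s := TypeCat.ofHom fun h => s.ι.app ⟨_⟩ (toSummand h)
  fac s j := by
    apply ConcreteCategory.hom_ext; intro t
    exact congrArg (s.ι.app j) (hom_ext (homOfFixed_gen _ _))
  uniq s m hm := by
    apply ConcreteCategory.hom_ext; intro h
    conv_lhs => rw [← toSummand_comp_ι h]
    exact types_congr_hom (hm ⟨_⟩) (toSummand h)

theorem indecomposable_principalUSet : Indecomposable (principalUSet e) := fun _ =>
  ⟨⟨fun {K} => preservesColimit_of_preserves_colimit_cocone
    (USet.isColimitSigmaCocone K) (isColimitMapCoconeSigmaCocone e K)⟩⟩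

/-- If `k ≫ m = 𝟙 X` with `k : X ⟶ fS`, then `m ≫ k` is left multiplication by an idempotent
`a ∈ fS`, and `k` identifies `X` with `aS`. -/
theorem exists_iso_principalUSet_of_retract {X : USet S} (f : {e : S // e * e = e})
    (k : X ⟶ principalUSet f) (m : principalUSet f ⟶ X) (hkm : k ≫ m = 𝟙 X) :
    ∃ e : {e : S // e * e = e}, Nonempty (X ≅ principalUSet e) := by
  set a : S := (k.toFun (m.toFun (gen f))).1
  have hfa : f.1 * a = a := (k.toFun (m.toFun (gen f))).2
  have hmk : ∀ w, (k.toFun (m.toFun w)).1 = a * w.1 :=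
    fun w => congrArg Subtype.val (hom_apply (m ≫ k) w)
  have hkm' : ∀ x, m.toFun (k.toFun x) = x := fun x => congrFun (congrArg RSet.Hom.toFun hkm) x
  have hka : ∀ x, a * (k.toFun x).1 = (k.toFun x).1 := fun x => by rw [← hmk, hkm']
  have haa : a * a = a := hka _
  refine ⟨⟨a, haa⟩, ⟨⟨fun x => ⟨(k.toFun x).1, hka x⟩, fun x s => ?_⟩,
    ⟨fun z => m.toFun ⟨z.1, by rw [← z.2, ← mul_assoc, hfa]⟩, fun z s => ?_⟩, ?_, ?_⟩⟩
  · have hk := congrArg Subtype.val (k.map_act x s)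
    exact Subtype.ext hk
  · exact m.map_act ⟨z.1, _⟩ s
  · exact RSet.Hom.ext (funext fun x => (congrArg m.toFun (Subtype.ext rfl)).trans (hkm' x))
  · exact RSet.Hom.ext (funext fun z => Subtype.ext ((hmk _).trans z.2))

theorem exists_iso_principalUSet_of_indecomposable_of_projective (X : USet S)
    (hInd : Indecomposable X) (hProj : Projective X) :
    ∃ e : {e : S // e * e = e}, Nonempty (X ≅ principalUSet e) := by
  choose fx hfx using USet.exists_idem_act_eq X
  let F : X.1.carrier → USet S := fun x => principalUSet (fx x)
  let π : USet.sigma F ⟶ X :=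
    ⟨fun p => X.1.act p.1 p.2.1, fun p t => (X.1.act_mul p.1 p.2.1 t).symm⟩
  have : Epi π := USet.epi_of_surjective π fun x => ⟨⟨x, gen (fx x)⟩, hfx x⟩
  obtain ⟨h, hh⟩ := hProj.factors (𝟙 X) π
  obtain ⟨_⟩ := hInd X.1.carrier
  obtain ⟨⟨j⟩, t, ht⟩ := Types.jointly_surjective _
    (isColimitOfPreserves (coyoneda.obj (Opposite.op X))
      (USet.isColimitSigmaCocone (Discrete.functor F))) h
  exact exists_iso_principalUSet_of_retract (fx j) t (USet.sigma.ι F j ≫ π)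
    (by rw [← Category.assoc]; exact (congrArg (· ≫ π) ht).trans hh)

theorem FFunctor_full : (FFunctor S).Full where
  map_surjective {e f} φ := by
    have hfa : f.1 * (φ.toFun (gen e)).1 = (φ.toFun (gen e)).1 := (φ.toFun (gen e)).2
    have hae : (φ.toFun (gen e)).1 * e.1 = (φ.toFun (gen e)).1 :=
      congrArg Subtype.val (hom_gen_act φ)
    exact ⟨⟨_, by rw [mul_assoc, ← mul_assoc, hfa, hae]⟩, hom_ext (Subtype.ext hae)⟩

theorem FFunctor_faithful : (FFunctor S).Faithful where
  map_injective {e f} u v huv := Subtype.ext <|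
    calc u.1 = u.1 * e.1 := (idem_right_absorb e.2 u.2).symm
      _ = v.1 * e.1 :=
        congrArg (fun q : principalUSet e ⟶ principalUSet f => (q.toFun (gen e)).1) huv
      _ = v.1 := idem_right_absorb e.2 v.2

/-- For an inverse semigroup `S`: (1) each `eS` is a unitary right `S`-set;
(2) a unitary right `S`-set is indecomposable and projective iff it is isomorphic
to some `eS`; (3) the functor `F : C(S) → S-Set`, `e ↦ eS`, is fully faithful. -/
theorem principal_usets_and_FFunctor
    (S : Type u) [InverseSemigroup S] :
    (∀ e : {e : S // e * e = e}, (principalRSet e).Unitary) ∧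
    (∀ X : USet S,
      (Indecomposable X ∧ Projective X) ↔
        ∃ e : {e : S // e * e = e}, Nonempty (X ≅ principalUSet e)) ∧
    ((FFunctor S).Full ∧ (FFunctor S).Faithful) := by
  refine ⟨principalRSet_unitary, fun X => ⟨fun ⟨hInd, hProj⟩ => ?_, ?_⟩,
    FFunctor_full, FFunctor_faithful⟩
  · exact exists_iso_principalUSet_of_indecomposable_of_projective X hInd hProj
  · rintro ⟨e, ⟨i⟩⟩
    exact ⟨(indecomposable_principalUSet e).of_iso i.symm,
      Projective.of_iso i.symm (projective_principalUSet e)⟩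
end

section
/- Let S be an inverse semigroup. The forgetful functor U : Étale(S) → S-Set, (X,p) ↦ X, from étale right S-sets to unitary right S-sets has a right adjoint R given by R(X) = {(e,x) ∈ E(S) × X : xe = x}, with action (e,x)s = (s*es, xs) and projection (e,x) ↦ e; moreover U is comonadic. -/
universe u

open CategoryTheory

open InverseSemigroup

namespace InverseSemigroup

variable {S : Type u} [InverseSemigroup S]

theorem conj_absorb {e : S} (he : e * e = e) (s : S) :
    s * (star s * e * s) = e * s := by
  have hc := idem_comm (mul_star_self_idem s) he
  have hc1 : ∀ y : S, s * (star s * (e * y)) = e * (s * (star s * y)) := fun y => by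
    have h := congrArg (· * y) hc; simpa only [mul_assoc] using h
  have hs0 : s * (star s * s) = s := by simpa only [mul_assoc] using mul_star_mul s
  calc s * (star s * e * s) = s * (star s * (e * s)) := by simp only [mul_assoc]
    _ = e * (s * (star s * s)) := hc1 s
    _ = e * s := by rw [hs0]

theorem conj_idem {e : S} (he : e * e = e) (s : S) :
    (star s * e * s) * (star s * e * s) = star s * e * s := by
  have h := congrArg (star s * ·) (congrArg (e * ·) (conj_absorb he s))
  simp only [mul_assoc] at h ⊢
  rw [h]
  have he1 : ∀ y : S, e * (e * y) = e * y := fun y => by rw [← mul_assoc, he]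
  rw [he1]

end InverseSemigroup

/-- An étale right `S`-set: a right `S`-set with a projection `p` to the
idempotents such that `p(x • s) = s* p(x) s` and `x • p(x) = x`. -/
structure EtaleSet (S : Type u) [InverseSemigroup S] : Type (u + 1) where
  carrier : Type u
  act : carrier → S → carrier
  act_mul : ∀ (x : carrier) (s t : S), act (act x s) t = act x (s * t)
  p : carrier → S
  p_idem : ∀ x, p x * p x = p x
  p_act : ∀ x s, p (act x s) = star s * p x * s
  act_p : ∀ x, act x (p x) = x

namespace EtaleSet

variable {S : Type u} [InverseSemigroup S]

/-- Morphisms of étale right `S`-sets: equivariant maps commuting with the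
projections. -/
@[ext]
structure Hom (X Y : EtaleSet S) where
  toFun : X.carrier → Y.carrier
  map_act : ∀ (x : X.carrier) (s : S), toFun (X.act x s) = Y.act (toFun x) s
  map_p : ∀ x, Y.p (toFun x) = X.p x

instance : Category.{u} (EtaleSet S) where
  Hom := Hom
  id X := ⟨fun x => x, fun _ _ => rfl, fun _ => rfl⟩
  comp f g := ⟨fun x => g.toFun (f.toFun x), fun x s => by
    simp [f.map_act, g.map_act], fun x => by simp [f.map_p, g.map_p]⟩

end EtaleSet

/-- The representable étale right `S`-set `eS`, with projection `s ↦ s* s`. -/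
def etalePrincipal {S : Type u} [InverseSemigroup S] (e : {e : S // e * e = e}) :
    EtaleSet S where
  carrier := {s : S // e.1 * s = s}
  act x s := ⟨x.1 * s, by rw [← mul_assoc, x.2]⟩
  act_mul x s t := Subtype.ext (mul_assoc x.1 s t)
  p x := star x.1 * x.1
  p_idem x := star_mul_self_idem x.1
  p_act x s := by
    show star (x.1 * s) * (x.1 * s) = star s * (star x.1 * x.1) * s
    rw [InverseSemigroup.star_mul]
    simp only [mul_assoc]
  act_p x := Subtype.ext (by
    show x.1 * (star x.1 * x.1) = x.1
    rw [← mul_assoc, mul_star_mul])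

/-- The forgetful functor from étale right `S`-sets to unitary right `S`-sets. -/
def UFunctor (S : Type u) [InverseSemigroup S] : EtaleSet S ⥤ USet S where
  obj X := ⟨⟨X.carrier, X.act, X.act_mul⟩, fun x => ⟨x, X.p x, X.act_p x⟩⟩
  map f := ⟨f.toFun, f.map_act⟩
  map_id X := rfl
  map_comp f g := rfl

/-- The right adjoint `R` of the forgetful functor:
`R(X) = {(e,x) ∈ E(S) × X : x • e = x}` with action `(e,x) • s = (s* e s, x • s)`
and projection `(e,x) ↦ e`. -/
def RFunctor (S : Type u) [InverseSemigroup S] : USet S ⥤ EtaleSet S where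
  obj X :=
    { carrier := {q : S × X.1.carrier // q.1 * q.1 = q.1 ∧ X.1.act q.2 q.1 = q.2}
      act := fun q s => ⟨(star s * q.1.1 * s, X.1.act q.1.2 s), conj_idem q.2.1 s, by
        show X.1.act (X.1.act q.1.2 s) (star s * q.1.1 * s) = X.1.act q.1.2 s
        rw [X.1.act_mul, conj_absorb q.2.1 s, ← X.1.act_mul, q.2.2]⟩
      act_mul := fun q s t => Subtype.ext (by
        apply Prod.ext
        · show star t * (star s * q.1.1 * s) * t = star (s * t) * q.1.1 * (s * t)
          rw [InverseSemigroup.star_mul]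
          simp only [mul_assoc]
        · exact X.1.act_mul q.1.2 s t)
      p := fun q => q.1.1
      p_idem := fun q => q.2.1
      p_act := fun q s => rfl
      act_p := fun q => Subtype.ext (by
        apply Prod.ext
        · show star q.1.1 * q.1.1 * q.1.1 = q.1.1
          rw [star_idem q.2.1, q.2.1, q.2.1]
        · exact q.2.2) }
  map {X Y} f :=
    { toFun := fun q => ⟨(q.1.1, f.toFun q.1.2), q.2.1, by rw [← f.map_act, q.2.2]⟩
      map_act := fun q s => Subtype.ext (Prod.ext rfl (f.map_act q.1.2 s))
      map_p := fun q => rfl }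
  map_id X := by
    apply EtaleSet.Hom.ext
    funext q
    rfl
  map_comp f g := by
    apply EtaleSet.Hom.ext
    funext q
    rfl

/-! By the counit law, a coalgebra structure for the comonad `U R` on a unitary `S`-set `X` is
an equivariant map of the form `x ↦ (p x, x)`. Membership of `(p x, x)` in `R X` says
`x · p x = x`, and equivariance says `p (x · s) = s* (p x) s`: these are exactly the axioms of
an étale structure. Likewise a map is a coalgebra morphism iff it commutes with the projections,
so the comparison functor is an equivalence. -/

section Comonadicity

variable (S : Type u) [InverseSemigroup S]

def uFunctorAdjunction : UFunctor S ⊣ RFunctor S where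
  unit :=
    { app := fun X =>
        { toFun := fun x => ⟨(X.p x, x), X.p_idem x, X.act_p x⟩
          map_act := fun x s => Subtype.ext (Prod.ext (X.p_act x s) rfl)
          map_p := fun _ => rfl }
      naturality := fun _ _ f => EtaleSet.Hom.ext <| funext fun x =>
        Subtype.ext (Prod.ext (f.map_p x) rfl) }
  counit :=
    { app := fun X =>
        { toFun := fun q => q.1.2
          map_act := fun _ _ => rfl } }
  left_triangle_components := fun _ => rfl
  right_triangle_components := fun _ => rfl

instance : (UFunctor S).Faithful where
  map_injective h := EtaleSet.Hom.ext (congrArg RSet.Hom.toFun h)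

variable {S}

theorem coalgebra_structure_snd (X : (uFunctorAdjunction S).toComonad.Coalgebra)
    (x : X.A.1.carrier) : (X.a.toFun x).1.2 = x :=
  congrFun (congrArg RSet.Hom.toFun X.counit) x

def etaleSetOfCoalgebra (X : (uFunctorAdjunction S).toComonad.Coalgebra) : EtaleSet S where
  carrier := X.A.1.carrier
  act := X.A.1.act
  act_mul := X.A.1.act_mul
  p x := (X.a.toFun x).1.1
  p_idem x := (X.a.toFun x).2.1
  p_act x s := congrArg (fun q => q.1.1) (X.a.map_act x s)
  act_p x := by
    have h := (X.a.toFun x).2.2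
    rwa [coalgebra_structure_snd] at h

instance : (Comonad.comparison (uFunctorAdjunction S)).Full where
  map_surjective f :=
    ⟨{ toFun := f.f.toFun
       map_act := f.f.map_act
       map_p := fun x => (congrArg (·.1.1) (congrFun (congrArg RSet.Hom.toFun f.h) x)).symm },
      rfl⟩

instance : (Comonad.comparison (uFunctorAdjunction S)).EssSurj where
  mem_essImage X :=
    ⟨etaleSetOfCoalgebra X, ⟨Comonad.Coalgebra.isoMk (Iso.refl _) <| RSet.Hom.ext <|
      funext fun x => Subtype.ext (Prod.ext rfl (coalgebra_structure_snd X x).symm)⟩⟩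

instance : ComonadicLeftAdjoint (UFunctor S) :=
  ⟨RFunctor S, uFunctorAdjunction S, { }⟩

end Comonadicity

/-- The forgetful functor `U` from étale right `S`-sets to unitary right `S`-sets
has `R` as a right adjoint, and `U` is comonadic. -/
theorem uFunctor_adjunction_and_comonadic
    (S : Type u) [InverseSemigroup S] :
    Nonempty (UFunctor S ⊣ RFunctor S) ∧
      Nonempty (ComonadicLeftAdjoint (UFunctor S)) :=
  ⟨⟨uFunctorAdjunction S⟩, ⟨inferInstance⟩⟩
end

section
/- Let S be an inverse semigroup. The functor R from the category of unitary right S-sets to Étale(S), sending X to the étale S-set {(e,x) ∈ E(S) × X : xe = x} with action (e,x)s = (s*es, xs) and projection (e,x) ↦ e, is monadic; consequently the category of unitary right S-sets is equivalent to the Eilenberg–Moore category of algebras for the monad R ∘ U on Étale(S), where U is the forgetful functor left adjoint to R. -/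
universe u

open CategoryTheory

open InverseSemigroup

/-!
An algebra `(Y, a)` for the monad `RU` assigns to `y ∈ Y` and an idempotent `e` with `y e = y`
an element `a(e, y)` over `e`; the algebra laws say `a(p y, y) = y` and `a(e, a(f, y)) = a(e, y)`
for `f ≤ e` (that is, `f e = f`). The unitary `S`-set it comes from is the quotient of `Y`
identifying each `y` with every `a(f, y)`: `(e, [y]) ↦ a(e, y e)` is well defined and inverts
`y ↦ (p y, [y])`. Conversely a morphism `h : RX → RX'` of algebras has the form
`h(e, x) = (e, g x)`: the algebra square compares `h(e, x)` with `h(f, x)` whenever `f ≤ e`,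
and any two idempotents fixing `x` lie above their product.
-/

namespace InverseSemigroup

variable {S : Type u} [InverseSemigroup S]

theorem star_mul_mul_idem {e f : S} (he : e * e = e) (hf : f * f = f) :
    star e * f * e = f * e := by
  rw [star_idem he, idem_comm he hf, mul_assoc, he]

theorem star_mul_mul_of_mul_eq {e f : S} (he : e * e = e) (hf : f * f = f) (hfe : f * e = f) :
    star e * f * e = f := by
  rw [star_mul_mul_idem he hf, hfe]

end InverseSemigroup

theorem EtaleSet.act_act_star_mul_mul {S : Type u} [InverseSemigroup S] (X : EtaleSet S)
    {e : S} (he : e * e = e) {x : X.carrier} (hx : X.act x e = x) (s : S) :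
    X.act (X.act x s) (star s * e * s) = X.act x s := by
  rw [X.act_mul, conj_absorb he s, ← X.act_mul, hx]

theorem USet.exists_idem_act_eq_s15 {S : Type u} [InverseSemigroup S] (X : USet S)
    (x : X.1.carrier) : ∃ e : S, e * e = e ∧ X.1.act x e = x := by
  obtain ⟨y, s, rfl⟩ := X.2 x
  exact ⟨star s * s, star_mul_self_idem s, by rw [X.1.act_mul, ← mul_assoc, mul_star_mul]⟩

namespace RFunctor

def adjunction (S : Type u) [InverseSemigroup S] : UFunctor S ⊣ RFunctor S :=
  Adjunction.mkOfUnitCounit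
    { unit :=
        { app := fun Y =>
            { toFun := fun y => ⟨(Y.p y, y), Y.p_idem y, Y.act_p y⟩
              map_act := fun y s => Subtype.ext (Prod.ext (Y.p_act y s) rfl)
              map_p := fun _ => rfl }
          naturality := fun _ _ f =>
            EtaleSet.Hom.ext (funext fun y => Subtype.ext (Prod.ext (f.map_p y) rfl)) }
      counit :=
        { app := fun X =>
            { toFun := fun q => q.1.2
              map_act := fun _ _ => rfl } }
      left_triangle := rfl
      right_triangle := rfl }

variable {S : Type u} [InverseSemigroup S]

section Algebra

variable (A : (adjunction S).toMonad.Algebra)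

open Classical in
/-- The structure map of `A` sends `(e, y)` with `y • e = y` to an element over `e`;
off that domain `extend` is the identity. -/
noncomputable def extend (e : S) (y : A.A.carrier) : A.A.carrier :=
  if h : e * e = e ∧ A.A.act y e = y then A.a.toFun ⟨(e, y), h⟩ else y

noncomputable def extendRestrict (e : S) (y : A.A.carrier) : A.A.carrier :=
  extend A e (A.A.act y e)

variable {A}

theorem extend_eq {e : S} {y : A.A.carrier} (h : e * e = e ∧ A.A.act y e = y) :
    extend A e y = A.a.toFun ⟨(e, y), h⟩ :=
  dif_pos h

theorem p_extend {e : S} {y : A.A.carrier} (he : e * e = e) (hy : A.A.act y e = y) :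
    A.A.p (extend A e y) = e := by
  rw [extend_eq ⟨he, hy⟩]
  exact A.a.map_p _

theorem extend_p (y : A.A.carrier) : extend A (A.A.p y) y = y := by
  rw [extend_eq ⟨A.A.p_idem y, A.A.act_p y⟩]
  exact congrArg (fun g => g.toFun y) A.unit

theorem extend_act {e : S} {y : A.A.carrier} (he : e * e = e) (hy : A.A.act y e = y) (s : S) :
    A.A.act (extend A e y) s = extend A (star s * e * s) (A.A.act y s) := by
  rw [extend_eq ⟨he, hy⟩]
  exact (A.a.map_act ⟨(e, y), he, hy⟩ s).symm.trans (extend_eq _).symm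

theorem extend_extend {e f : S} {y : A.A.carrier} (he : e * e = e) (hf : f * f = f)
    (hfe : f * e = f) (hy : A.A.act y f = y) :
    extend A e (extend A f y) = extend A e y := by
  have hye : A.A.act y e = y := by rw [← hy, A.A.act_mul, hfe]
  have hext : A.A.act (extend A f y) e = extend A f y := by
    rw [extend_act hf hy, star_mul_mul_of_mul_eq he hf hfe, hye]
  have assoc := congrArg (fun g => g.toFun ⟨(e, ⟨(f, y), hf, hy⟩), he,
    Subtype.ext (Prod.ext (star_mul_mul_of_mul_eq he hf hfe) hye)⟩) A.assoc
  rw [extend_eq ⟨he, hext⟩, extend_eq ⟨he, hye⟩]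
  refine Eq.trans ?_ assoc.symm
  exact congrArg A.a.toFun (Subtype.ext (Prod.ext rfl (extend_eq ⟨hf, hy⟩)))

theorem p_extendRestrict {e : S} (he : e * e = e) (y : A.A.carrier) :
    A.A.p (extendRestrict A e y) = e :=
  p_extend he (by rw [A.A.act_mul, he])

theorem extendRestrict_p (y : A.A.carrier) : extendRestrict A (A.A.p y) y = y := by
  rw [extendRestrict, A.A.act_p, extend_p]

theorem extendRestrict_act {e : S} (he : e * e = e) (y : A.A.carrier) (s : S) :
    A.A.act (extendRestrict A e y) s = extendRestrict A (star s * e * s) (A.A.act y s) := by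
  rw [extendRestrict, extend_act he (by rw [A.A.act_mul, he]), extendRestrict,
    A.A.act_mul, A.A.act_mul, conj_absorb he s]

theorem extendRestrict_extend {e f : S} (he : e * e = e) (hf : f * f = f)
    {z : A.A.carrier} (hz : A.A.act z f = z) :
    extendRestrict A e (extend A f z) = extendRestrict A e z := by
  have hze : A.A.act (A.A.act z e) (f * e) = A.A.act z e := by
    rw [A.A.act_mul, ← mul_assoc, idem_comm he hf, mul_assoc, he, ← A.A.act_mul, hz]
  rw [extendRestrict, extend_act hf hz, star_mul_mul_idem he hf,
    extend_extend he (mul_idem hf he) (by rw [mul_assoc, he]) hze, extendRestrict]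

variable (A)

def ExtendRel (y z : A.A.carrier) : Prop :=
  ∃ f : S, f * f = f ∧ A.A.act z f = z ∧ y = extend A f z

def quotientRSet : RSet S where
  carrier := Quot (ExtendRel A)
  act ξ s := Quot.lift (fun y => Quot.mk _ (A.A.act y s))
    (by
      rintro _ z ⟨f, hf, hz, rfl⟩
      exact Quot.sound ⟨_, conj_idem hf s, A.A.act_act_star_mul_mul hf hz s, extend_act hf hz s⟩)
    ξ
  act_mul ξ s t := Quot.inductionOn ξ fun y => congrArg (Quot.mk _) (A.A.act_mul y s t)

def quotientUSet : USet S :=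
  ⟨quotientRSet A, fun ξ => Quot.inductionOn ξ fun y =>
    ⟨Quot.mk _ y, A.A.p y, congrArg (Quot.mk _) (A.A.act_p y)⟩⟩

def toRQuotient : A.A ⟶ (RFunctor S).obj (quotientUSet A) where
  toFun y := ⟨(A.A.p y, Quot.mk _ y), A.A.p_idem y, congrArg (Quot.mk _) (A.A.act_p y)⟩
  map_act y s := Subtype.ext (Prod.ext (A.A.p_act y s) rfl)
  map_p _ := rfl

noncomputable def ofRQuotient : (RFunctor S).obj (quotientUSet A) ⟶ A.A where
  toFun q := Quot.lift (extendRestrict A q.1.1)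
    (by
      rintro _ z ⟨f, hf, hz, rfl⟩
      exact extendRestrict_extend q.2.1 hf hz)
    q.1.2
  map_act := by
    rintro ⟨⟨e, ξ⟩, he, -⟩ s
    induction ξ using Quot.ind with
    | mk y => exact (extendRestrict_act he y s).symm
  map_p := by
    rintro ⟨⟨e, ξ⟩, he, -⟩
    induction ξ using Quot.ind with
    | mk y => exact p_extendRestrict he y

noncomputable def algebraIso :
    A ≅ (Monad.comparison (adjunction S)).obj (quotientUSet A) :=
  Monad.Algebra.isoMk
    { hom := toRQuotient A
      inv := ofRQuotient A
      hom_inv_id := EtaleSet.Hom.ext (funext extendRestrict_p)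
      inv_hom_id := by
        refine EtaleSet.Hom.ext (funext ?_)
        rintro ⟨⟨e, ξ⟩, he, hξ⟩
        induction ξ using Quot.ind with
        | mk y =>
          exact Subtype.ext (Prod.ext (p_extendRestrict he y)
            ((Quot.sound ⟨e, he, by rw [A.A.act_mul, he], rfl⟩).trans hξ)) }
    (by
      refine EtaleSet.Hom.ext (funext ?_)
      rintro ⟨⟨e, y⟩, he, hy⟩
      exact Subtype.ext (Prod.ext (A.a.map_p ⟨(e, y), he, hy⟩).symm
        (Quot.sound ⟨e, he, hy, (extend_eq ⟨he, hy⟩).symm⟩).symm))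

end Algebra

instance : (Monad.comparison (adjunction S)).EssSurj :=
  ⟨fun A => ⟨quotientUSet A, ⟨(algebraIso A).symm⟩⟩⟩

section FullyFaithful

variable {X X' : USet S}
  (h : (Monad.comparison (adjunction S)).obj X ⟶ (Monad.comparison (adjunction S)).obj X')

/-- Compatibility of `h` with the structure maps `R ε`, evaluated at `(e, (f, x))`. -/
theorem snd_hom_of_mul_eq {e f : S} (he : e * e = e) (hf : f * f = f) (hfe : f * e = f)
    {x : X.1.carrier} (hxe : X.1.act x e = x) (hxf : X.1.act x f = x) :
    (h.f.toFun ⟨(f, x), hf, hxf⟩).1.2 = (h.f.toFun ⟨(e, x), he, hxe⟩).1.2 :=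
  congrArg (fun q => q.1.2) (congrArg (fun g => g.toFun ⟨(e, ⟨(f, x), hf, hxf⟩), he,
    Subtype.ext (Prod.ext (star_mul_mul_of_mul_eq he hf hfe) hxe)⟩) h.h)

theorem snd_hom_eq {q q' : ((RFunctor S).obj X).carrier} (hq : q.1.2 = q'.1.2) :
    (h.f.toFun q).1.2 = (h.f.toFun q').1.2 := by
  obtain ⟨⟨e, x⟩, he, hxe⟩ := q
  obtain ⟨⟨f, x'⟩, hf, hxf⟩ := q'
  obtain rfl : x = x' := hq
  have hxef : X.1.act x (e * f) = x := by rw [← X.1.act_mul, hxe, hxf]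
  rw [← snd_hom_of_mul_eq h he (mul_idem he hf) (by rw [mul_assoc, idem_comm hf he,
      ← mul_assoc, he]) hxe hxef,
    snd_hom_of_mul_eq h hf (mul_idem he hf) (by rw [mul_assoc, hf]) hxf hxef]

variable (X) in
noncomputable def fixingPoint (x : X.1.carrier) : ((RFunctor S).obj X).carrier :=
  ⟨((X.exists_idem_act_eq_s15 x).choose, x), (X.exists_idem_act_eq_s15 x).choose_spec⟩

noncomputable def homPreimage : X ⟶ X' where
  toFun x := (h.f.toFun (fixingPoint X x)).1.2
  map_act x s := (snd_hom_eq h (q := fixingPoint X (X.1.act x s))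
      (q' := ((RFunctor S).obj X).act (fixingPoint X x) s) rfl).trans
    (congrArg (fun q => q.1.2) (h.f.map_act (fixingPoint X x) s))

instance : (Monad.comparison (adjunction S)).Full where
  map_surjective h := ⟨homPreimage h, Monad.Algebra.Hom.ext (EtaleSet.Hom.ext (funext fun q =>
    Subtype.ext (Prod.ext (h.f.map_p q).symm (snd_hom_eq h rfl))))⟩

instance : (Monad.comparison (adjunction S)).Faithful where
  map_injective {X _} _ _ hgg' := RSet.Hom.ext (funext fun x =>
    congrArg (fun q => q.1.2) (congrFun (congrArg (fun φ => φ.f.toFun) hgg') (fixingPoint X x)))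

end FullyFaithful

instance : (Monad.comparison (adjunction S)).IsEquivalence where

end RFunctor

/-- The functor `R : S-Set → Étale(S)` is monadic; consequently the category of
unitary right `S`-sets is equivalent to the Eilenberg–Moore category of algebras
for the induced monad `R ∘ U` on the category of étale right `S`-sets. -/
theorem rFunctor_monadic
    (S : Type u) [InverseSemigroup S] :
    Nonempty (MonadicRightAdjoint (RFunctor S)) ∧
      ∃ adj : UFunctor S ⊣ RFunctor S,
        Nonempty (USet S ≌ (Adjunction.toMonad adj).Algebra) :=
  ⟨⟨⟨UFunctor S, RFunctor.adjunction S, inferInstance⟩⟩,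
    RFunctor.adjunction S, ⟨(Monad.comparison (RFunctor.adjunction S)).asEquivalence⟩⟩
end

section
/- Let S be an inverse semigroup and let I : L(S) → C(S) be the inclusion functor which is the identity on objects and sends a morphism (e,s) to (e,s,s*s). Then the restriction functor I* : PSh(C(S)) → PSh(L(S)), given by precomposition with I, is both monadic and comonadic. -/
universe u

open CategoryTheory

open InverseSemigroup

/-- The left-cancellative category `L(S)` of an inverse semigroup `S`: objects are
the idempotents, and a morphism `f ⟶ e` is an element `s` with `e * s = s` and
`s* * s = f`; composition is multiplication. -/
def LCat (S : Type u) [InverseSemigroup S] : Type u := {e : S // e * e = e}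

namespace LCat

variable {S : Type u} [InverseSemigroup S]

instance : Category.{u} (LCat S) where
  Hom f e := {s : S // e.1 * s = s ∧ star s * s = f.1}
  id e := ⟨e.1, by rw [e.2], by rw [star_idem e.2, e.2]⟩
  comp := fun {f g e} u v => ⟨v.1 * u.1, by
      constructor
      · rw [← mul_assoc, v.2.1]
      · calc star (v.1 * u.1) * (v.1 * u.1)
            = star u.1 * ((star v.1 * v.1) * u.1) := by
              rw [InverseSemigroup.star_mul]; simp only [mul_assoc]
          _ = star u.1 * (g.1 * u.1) := by rw [v.2.2]
          _ = star u.1 * u.1 := by rw [u.2.1]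
          _ = f.1 := u.2.2⟩
  id_comp := fun {f e} u => by
    apply Subtype.ext
    show u.1 * f.1 = u.1
    have h2 := u.2.2
    calc u.1 * f.1 = u.1 * (star u.1 * u.1) := by rw [h2]
      _ = u.1 := by rw [← mul_assoc, mul_star_mul]
  comp_id := fun {f e} u => by
    apply Subtype.ext
    show e.1 * u.1 = u.1
    exact u.2.1
  assoc := fun u v w => Subtype.ext (mul_assoc w.1 v.1 u.1).symm

end LCat

/-- The inclusion functor `I : L(S) → C(S)`, the identity on objects, sending
`(e,s)` to `(e,s,s*s)`. -/
def IFunctor (S : Type u) [InverseSemigroup S] : LCat S ⥤ CauchyCat S where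
  obj e := ⟨e.1, e.2⟩
  map {f e} u := ⟨u.1, by
    show e.1 * u.1 * f.1 = u.1
    have h2 := u.2.2
    rw [u.2.1]
    calc u.1 * f.1 = u.1 * (star u.1 * u.1) := by rw [h2]
      _ = u.1 := by rw [← mul_assoc, mul_star_mul]⟩
  map_id e := Subtype.ext rfl
  map_comp u v := Subtype.ext rfl

/-- The restriction functor `I* : PSh(C(S)) → PSh(L(S))`, precomposition with `I`. -/
def IStar (S : Type u) [InverseSemigroup S] :
    ((CauchyCat S)ᵒᵖ ⥤ Type u) ⥤ ((LCat S)ᵒᵖ ⥤ Type u) :=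
  (Functor.whiskeringLeft (LCat S)ᵒᵖ (CauchyCat S)ᵒᵖ (Type u)).obj (IFunctor S).op

/-!
`I` is the identity on objects, so restriction along it detects isomorphisms. Restriction
along any functor between small categories has both Kan extensions as adjoints and preserves
all limits and colimits of presheaves, so Beck's monadicity theorem and its dual apply.
-/

universe v₁ v₂ u₁

namespace CategoryTheory

instance Monad.preservesColimitOfIsReflexivePair_of_preservesCoequalizers {C D : Type*}
    [Category C] [Category D] (G : C ⥤ D)
    [Limits.PreservesColimitsOfShape Limits.WalkingParallelPair G] :
    Monad.PreservesColimitOfIsReflexivePair G :=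
  ⟨fun _ _ _ _ _ => inferInstance⟩

instance Comonad.preservesLimitOfIsCoreflexivePair_of_preservesEqualizers {C D : Type*}
    [Category C] [Category D] (G : C ⥤ D)
    [Limits.PreservesLimitsOfShape Limits.WalkingParallelPair G] :
    Comonad.PreservesLimitOfIsCoreflexivePair G :=
  ⟨fun _ _ _ _ _ => inferInstance⟩

namespace Functor

instance reflectsIsomorphisms_whiskeringLeft_obj_of_essSurj {C D H : Type*} [Category C]
    [Category D] [Category H] (L : C ⥤ D) [L.EssSurj] :
    ((whiskeringLeft C D H).obj L).ReflectsIsomorphisms where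
  reflects α hα := by
    rw [NatTrans.isIso_iff_isIso_app] at hα ⊢
    intro Y
    rw [← NatTrans.isIso_app_iff_of_iso α (L.objObjPreimageIso Y)]
    exact hα _

variable {C D : Type u₁} [Category.{v₁} C] [Category.{v₂} D] {H : Type*} [Category H]
  (L : C ⥤ D) [L.EssSurj]

noncomputable abbrev monadicRightAdjointWhiskeringLeftObjOfEssSurj
    [∀ F : C ⥤ H, L.HasLeftKanExtension F]
    [Limits.HasColimitsOfShape Limits.WalkingParallelPair H] :
    MonadicRightAdjoint ((whiskeringLeft C D H).obj L) :=
  Monad.monadicOfHasPreservesReflexiveCoequalizersOfReflectsIsomorphisms (L.lanAdjunction H)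

noncomputable abbrev comonadicLeftAdjointWhiskeringLeftObjOfEssSurj
    [∀ F : C ⥤ H, L.HasRightKanExtension F]
    [Limits.HasLimitsOfShape Limits.WalkingParallelPair H] :
    ComonadicLeftAdjoint ((whiskeringLeft C D H).obj L) :=
  Comonad.comonadicOfHasPreservesCoreflexiveEqualizersOfReflectsIsomorphisms (L.ranAdjunction H)

end Functor

end CategoryTheory

instance IFunctor.essSurj (S : Type u) [InverseSemigroup S] : (IFunctor S).EssSurj where
  mem_essImage e := ⟨e, ⟨Iso.refl _⟩⟩

/-- The restriction functor `I* : PSh(C(S)) → PSh(L(S))` is both monadic and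
comonadic. -/
theorem iStar_monadic_and_comonadic
    (S : Type u) [InverseSemigroup S] :
    Nonempty (MonadicRightAdjoint (IStar S)) ∧
      Nonempty (ComonadicLeftAdjoint (IStar S)) :=
  ⟨⟨(IFunctor S).op.monadicRightAdjointWhiskeringLeftObjOfEssSurj⟩,
    ⟨(IFunctor S).op.comonadicLeftAdjointWhiskeringLeftObjOfEssSurj⟩⟩
end

section
/- Let S and T be inverse semigroups and let U : PSh(L(S)) → PSh(L(T)) be an equivalence of categories. Let b ≤ d be idempotents of S (i.e. b = bd), let e be an idempotent of T, and let x : y(e) ≅ U(y(d)) be an isomorphism in PSh(L(T)), where y denotes the Yoneda embedding. Then there exist a unique idempotent a of T with a ≤ e (i.e. a = ae) and a unique isomorphism z : y(a) ≅ U(y(b)) such that the square with top edge z, bottom edge x, left edge y(e,a) : y(a) → y(e) and right edge U(y(d,b)) : U(y(b)) → U(y(d)) is a pullback square in PSh(L(T)). -/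
universe u

open CategoryTheory

open InverseSemigroup

/-- The object of `L(S)` attached to an idempotent. -/
def LCat.mk {S : Type u} [InverseSemigroup S] (e : S) (he : e * e = e) : LCat S :=
  ⟨e, he⟩

/-- The morphism `(e,a) : a ⟶ e` of `L(S)` attached to an inequality `a ≤ e`
of idempotents. -/
def LCat.homOfLe {S : Type u} [InverseSemigroup S] {a e : S}
    (ha : a * a = a) (he : e * e = e) (h : a * e = a) :
    LCat.mk a ha ⟶ LCat.mk e he :=
  ⟨a, by show e * a = a; rw [idem_comm he ha]; exact h,
    by show star a * a = a; rw [star_idem ha]; exact ha⟩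

/-!
Since `Hom(y(b), -)` is evaluation at `b`, it preserves colimits, and hence so does
`Hom(U(y(b)), -)`. Writing `U(y(b))` as the colimit of the representables over it, the
identity of `U(y(b))` factors through one of them: `U(y(b))` is a retract of some `y(c)`.
The retraction `y(c) → U(y(b))` followed by the mono `U(y(d,b)) ≫ x⁻¹` into `y(e)` is `y(t)`
for some `t : c ⟶ e`, and every morphism of `L(T)` is monic, so the retraction is an
isomorphism. Over `e`, `t` is isomorphic to the inclusion `(e, t t*)`, which yields `a`; two
inclusions `(e, a)`, `(e, a')` isomorphic over `e` have `a = a'`. As `z` and `x` are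
isomorphisms, the square is a pullback exactly when it commutes, and `z` is unique because
the right edge is monic.
-/

open Opposite Limits

universe v w₁ w₂

theorem preservesColimit_coyoneda_obj_functor_obj {A : Type w₁} [Category.{v} A]
    {B : Type w₂} [Category.{v} B] {J : Type*} [Category J]
    (F : A ≌ B) (X : A) (K : J ⥤ B)
    [PreservesColimit (K ⋙ F.inverse) (coyoneda.obj (op X))] :
    PreservesColimit K (coyoneda.obj (op (F.functor.obj X))) :=
  have : PreservesColimit K (F.inverse ⋙ coyoneda.obj (op X)) := comp_preservesColimit _ _
  let iso : F.inverse ⋙ coyoneda.obj (op X) ≅ coyoneda.obj (op (F.functor.obj X)) :=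
    (F.toAdjunction.compCoyonedaIso.app (op X)).symm
  preservesColimit_of_natIso K iso

theorem exists_retract_yoneda {C : Type u} [SmallCategory C] (P : Cᵒᵖ ⥤ Type u)
    [PreservesColimit (CostructuredArrow.proj yoneda P ⋙ yoneda) (coyoneda.obj (op P))] :
    ∃ c : C, Nonempty (Retract P (yoneda.obj c)) := by
  obtain ⟨j, i, hi⟩ := exists_hom_of_preservesColimit_coyoneda
    (Presheaf.isColimitTautologicalCocone P) (𝟙 P)
  exact ⟨j.left, ⟨⟨i, j.hom, hi⟩⟩⟩

theorem exists_retract_yoneda_of_isEquivalence {C D : Type u} [SmallCategory C]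
    [SmallCategory D] (U : (Cᵒᵖ ⥤ Type u) ⥤ (Dᵒᵖ ⥤ Type u)) [U.IsEquivalence] (b : C) :
    ∃ c : D, Nonempty (Retract (U.obj (yoneda.obj b)) (yoneda.obj c)) :=
  have : PreservesColimit (CostructuredArrow.proj yoneda (U.obj (yoneda.obj b)) ⋙ yoneda)
      (coyoneda.obj (op (U.obj (yoneda.obj b)))) :=
    preservesColimit_coyoneda_obj_functor_obj U.asEquivalence (yoneda.obj b) _
  exists_retract_yoneda _

theorem InverseSemigroup.star_mul_eq_star_of_mul_eq {S : Type u} [InverseSemigroup S] {e s : S}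
    (he : e * e = e) (h : e * s = s) : star s * e = star s := by
  rw [← star_idem he, ← InverseSemigroup.star_mul, h]

namespace LCat

variable {T : Type u} [InverseSemigroup T]

instance mono {f g : LCat T} (u : f ⟶ g) : Mono u where
  right_cancellation v w h := Subtype.ext <| by
    have hvw : u.1 * v.1 = u.1 * w.1 := congrArg Subtype.val h
    calc v.1 = star u.1 * u.1 * v.1 := by rw [u.2.2, v.2.1]
      _ = star u.1 * u.1 * w.1 := by rw [mul_assoc, hvw, ← mul_assoc]
      _ = w.1 := by rw [u.2.2, w.2.1]

theorem exists_iso_comp_eq_homOfLe {c : LCat T} {e : T} (he : e * e = e)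
    (t : c ⟶ LCat.mk e he) :
    ∃ (a : T) (ha : a * a = a) (hae : a * e = a) (g : LCat.mk a ha ≅ c),
      g.hom ≫ t = homOfLe ha he hae := by
  have htc : star t.1 * t.1 = c.1 := t.2.2
  let g : LCat.mk (t.1 * star t.1) (mul_star_self_idem t.1) ≅ c :=
    { hom := ⟨star t.1, (congrArg (· * star t.1) htc).symm.trans (star_mul_star t.1),
        congrArg (· * star t.1) (InverseSemigroup.star_star t.1)⟩
      inv := ⟨t.1, mul_star_mul t.1, htc⟩
      hom_inv_id := rfl
      inv_hom_id := Subtype.ext htc }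
  refine ⟨_, _, ?_, g, rfl⟩
  rw [mul_assoc, star_mul_eq_star_of_mul_eq he t.2.1]

theorem eq_of_iso_comp_homOfLe {a a' e : T} {ha : a * a = a} {ha' : a' * a' = a'}
    {he : e * e = e} {hae : a * e = a} {hae' : a' * e = a'}
    (g : LCat.mk a' ha' ≅ LCat.mk a ha) (hg : g.hom ≫ homOfLe ha he hae = homOfLe ha' he hae') :
    a' = a := by
  have hom_val : g.hom.1 = a' := g.hom.2.1.symm.trans (congrArg Subtype.val hg)
  have hom_inv : g.inv.1 * g.hom.1 = a' := congrArg Subtype.val g.hom_inv_id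
  have inv_hom : g.hom.1 * g.inv.1 = a := congrArg Subtype.val g.inv_hom_id
  rw [hom_val] at hom_inv inv_hom
  have inv_val : g.inv.1 = a := g.inv.2.1.symm.trans inv_hom
  rw [inv_val] at hom_inv inv_hom
  calc a' = a * a' := hom_inv.symm
    _ = a' * a := idem_comm ha ha'
    _ = a := inv_hom

theorem exists_iso_yoneda_comp_eq {P : (LCat T)ᵒᵖ ⥤ Type u} {c : LCat T}
    (hP : Retract P (yoneda.obj c)) {e : T} (he : e * e = e) (m : P ⟶ yoneda.obj (mk e he)) :
    ∃ (a : T) (ha : a * a = a) (hae : a * e = a) (z : yoneda.obj (mk a ha) ≅ P),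
      z.hom ≫ m = yoneda.map (homOfLe ha he hae) := by
  let t : c ⟶ mk e he := yoneda.preimage (hP.r ≫ m)
  have : Mono (hP.r ≫ m) := by rw [← yoneda.map_preimage (hP.r ≫ m)]; infer_instance
  have : Mono hP.r := mono_of_mono _ m
  have : IsIso hP.r := isIso_of_mono_of_isSplitEpi _
  obtain ⟨a, ha, hae, g, hg⟩ := exists_iso_comp_eq_homOfLe he t
  refine ⟨a, ha, hae, yoneda.mapIso g ≪≫ asIso hP.r, ?_⟩
  simp [← hg, t]

theorem eq_and_heq_of_iso_yoneda_comp_eq {P : (LCat T)ᵒᵖ ⥤ Type u} {e : T} {he : e * e = e}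
    (m : P ⟶ yoneda.obj (mk e he)) [Mono m] {a a' : T} {ha : a * a = a} {ha' : a' * a' = a'}
    {hae : a * e = a} {hae' : a' * e = a'}
    (z : yoneda.obj (mk a ha) ≅ P) (z' : yoneda.obj (mk a' ha') ≅ P)
    (hz : z.hom ≫ m = yoneda.map (homOfLe ha he hae))
    (hz' : z'.hom ≫ m = yoneda.map (homOfLe ha' he hae')) :
    a' = a ∧ HEq z' z := by
  have hcomp : (yoneda.preimageIso (z' ≪≫ z.symm)).hom ≫ homOfLe ha he hae =
      homOfLe ha' he hae' :=
    yoneda.map_injective (by simp [← hz, ← hz'])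
  obtain rfl := eq_of_iso_comp_homOfLe _ hcomp
  exact ⟨rfl, heq_of_eq (Iso.ext ((cancel_mono m).1 (hz'.trans hz.symm)))⟩

end LCat

/-- Given an equivalence `U : PSh(L(S)) ≃ PSh(L(T))`, idempotents `b ≤ d` of `S`,
an idempotent `e` of `T` and an isomorphism `x : y(e) ≅ U(y(d))`, there are a
unique idempotent `a ≤ e` of `T` and a unique isomorphism `z : y(a) ≅ U(y(b))`
making the square with sides `z`, `y(e,a)`, `U(y(d,b))`, `x` a pullback. -/
theorem unique_pullback_restriction
    (S T : Type u) [InverseSemigroup S] [InverseSemigroup T]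
    (U : ((LCat S)ᵒᵖ ⥤ Type u) ⥤ ((LCat T)ᵒᵖ ⥤ Type u)) [U.IsEquivalence]
    (b d : S) (hb : b * b = b) (hd : d * d = d) (hbd : b * d = b)
    (e : T) (he : e * e = e)
    (x : yoneda.obj (LCat.mk e he) ≅ U.obj (yoneda.obj (LCat.mk d hd))) :
    ∃ (a : T) (ha : a * a = a) (hae : a * e = a)
      (z : yoneda.obj (LCat.mk a ha) ≅ U.obj (yoneda.obj (LCat.mk b hb))),
      IsPullback z.hom (yoneda.map (LCat.homOfLe ha he hae))
        (U.map (yoneda.map (LCat.homOfLe hb hd hbd))) x.hom ∧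
      ∀ (a' : T) (ha' : a' * a' = a') (hae' : a' * e = a')
        (z' : yoneda.obj (LCat.mk a' ha') ≅ U.obj (yoneda.obj (LCat.mk b hb))),
        IsPullback z'.hom (yoneda.map (LCat.homOfLe ha' he hae'))
          (U.map (yoneda.map (LCat.homOfLe hb hd hbd))) x.hom →
        a' = a ∧ HEq z' z := by
  obtain ⟨c, ⟨hc⟩⟩ := exists_retract_yoneda_of_isEquivalence U (LCat.mk b hb)
  let m := U.map (yoneda.map (LCat.homOfLe hb hd hbd)) ≫ x.inv
  obtain ⟨a, ha, hae, z, hz⟩ := LCat.exists_iso_yoneda_comp_eq hc he m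
  refine ⟨a, ha, hae, z, IsPullback.of_horiz_isIso ⟨?_⟩, fun a' ha' hae' z' hpb => ?_⟩
  · rwa [← Iso.comp_inv_eq, Category.assoc]
  · have hz' : z'.hom ≫ m = yoneda.map (LCat.homOfLe ha' he hae') := by
      rw [← Category.assoc, Iso.comp_inv_eq]
      exact hpb.w
    exact LCat.eq_and_heq_of_iso_yoneda_comp_eq m z z' hz hz'
end
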